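/- arXiv:2512.16398 — 6 statements merged into one kernel-verified Lean document; each statement's English description precedes it below -/
import Mathlib

section
/- For every graph F on r ≥ 2 vertices and every real z < r!/(r^r − r), there exists an integer k ≥ 2 with i_k(F) ≥ z. Consequently, sup_{k} i_k(F) ≥ r!/(r^r − r). -/
open Filter Topology

/-- The number of `|V(F)|`-element subsets of the vertex set of `G` that induce a
subgraph isomorphic to `F`. -/
noncomputable def inducedCount {α β : Type*} [Fintype α] [Fintype β]
    (F : SimpleGraph α) (G : SimpleGraph β) : ℕ :=
  Set.ncard {s : Finset β | s.card = Fintype.card α ∧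
    Nonempty (F ≃g SimpleGraph.induce (↑s : Set β) G)}

/-- The induced density `p(F,G) = P(F,G)/C(n,r)`. -/
noncomputable def inducedDensity {α β : Type*} [Fintype α] [Fintype β]
    (F : SimpleGraph α) (G : SimpleGraph β) : ℝ :=
  (inducedCount F G : ℝ) / ((Fintype.card β).choose (Fintype.card α))

/-- `i_k(F,n)`: the maximum induced density of `F` over `K_k`-free graphs on `n` vertices. -/
noncomputable def ikn {α : Type*} [Fintype α] (F : SimpleGraph α) (k n : ℕ) : ℝ :=
  sSup {x : ℝ | ∃ G : SimpleGraph (Fin n), G.CliqueFree k ∧ x = inducedDensity F G}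

/-- `i_k(F) = lim_{n → ∞} i_k(F,n)`. -/
noncomputable def ik {α : Type*} [Fintype α] (F : SimpleGraph α) (k : ℕ) : ℝ :=
  limUnder atTop (fun n => ikn F k n)

/-- A graph `F` is inducibility diverse if for every `k` there is `m > k`
with `i_k(F) < i_m(F)`. -/
def InducibilityDiverse {α : Type*} [Fintype α] (F : SimpleGraph α) : Prop :=
  ∀ k : ℕ, ∃ m : ℕ, k < m ∧ ik F k < ik F m


/-!
Substituting a graph `G` into every vertex of `F` (the lexicographic product `F[G]`) creates an
induced copy of `F` on every transversal of the parts, besides `|V(F)|` copies of each induced copy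
of `F` in `G`. Measured by the labelled density `q = P(F,G) r!/n^r`, this gives
`q(F[G]) ≥ r!/r^r + (r/r^r) q(G)`. Iterating `d` times from the edgeless graph on `t` vertices
yields `r^d`-colourable, hence `K_{r^d+1}`-free, graphs on `r^d t` vertices whose induced density
is at least `r!/(r^r - r) (1 - (r/r^r)^d)`. Since `i_k(F,n)` is nonincreasing in `n` (average over
the vertex-deleted subgraphs), letting `t → ∞` bounds `i_{r^d+1}(F)` by the same quantity, and
letting `d → ∞` gives the theorem.
-/

open SimpleGraph Finset

section InducedCopies

variable {α β γ : Type*} [Fintype α] [Fintype β] [Fintype γ] (F : SimpleGraph α)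

open scoped Classical in
noncomputable def inducedCopies (G : SimpleGraph β) : Finset (Finset β) :=
  {s | s.card = Fintype.card α ∧ Nonempty (F ≃g G.induce (↑s : Set β))}

variable {F}

lemma inducedCount_eq_card_inducedCopies (G : SimpleGraph β) :
    inducedCount F G = #(inducedCopies F G) := by
  classical
  rw [inducedCount, inducedCopies, ← Set.ncard_coe_finset, coe_filter]
  simp

lemma mem_inducedCopies_iff {G : SimpleGraph β} {s : Finset β} :
    s ∈ inducedCopies F G ↔ ∃ φ : F ↪g G, univ.map φ.toEmbedding = s := by
  classical
  simp only [inducedCopies, mem_filter, mem_univ, true_and]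
  constructor
  · rintro ⟨-, ⟨e⟩⟩
    refine ⟨(Embedding.induce _).comp e.toEmbedding, ?_⟩
    ext x
    simp only [Finset.mem_map, mem_univ, true_and]
    exact ⟨by rintro ⟨a, rfl⟩; exact (e a).2, fun hx => ⟨e.symm ⟨x, hx⟩, by simp⟩⟩
  · rintro ⟨φ, rfl⟩
    refine ⟨by simp, ?_⟩
    rw [coe_map, coe_univ, Set.image_univ]
    exact ⟨φ.isoInduceRange⟩

lemma map_mem_inducedCopies {G : SimpleGraph β} {G' : SimpleGraph γ} (ψ : G ↪g G')
    {s : Finset β} (hs : s ∈ inducedCopies F G) :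
    s.map ψ.toEmbedding ∈ inducedCopies F G' := by
  obtain ⟨φ, rfl⟩ := mem_inducedCopies_iff.1 hs
  exact mem_inducedCopies_iff.2 ⟨ψ.comp φ, by rw [Finset.map_map]; rfl⟩

lemma inducedCount_le_of_embedding {G : SimpleGraph β} {G' : SimpleGraph γ} (ψ : G ↪g G') :
    inducedCount F G ≤ inducedCount F G' := by
  rw [inducedCount_eq_card_inducedCopies, inducedCount_eq_card_inducedCopies]
  exact card_le_card_of_injOn _ (fun s hs => map_mem_inducedCopies ψ hs)
    (Finset.map_injective _).injOn

lemma SimpleGraph.Iso.inducedCount_eq {G : SimpleGraph β} {G' : SimpleGraph γ} (e : G ≃g G') :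
    inducedCount F G = inducedCount F G' :=
  (inducedCount_le_of_embedding e.toEmbedding).antisymm
    (inducedCount_le_of_embedding e.symm.toEmbedding)

lemma inducedCount_le_choose (G : SimpleGraph β) :
    inducedCount F G ≤ (Fintype.card β).choose (Fintype.card α) := by
  classical
  rw [inducedCount_eq_card_inducedCopies, ← card_univ, ← card_powersetCard]
  refine card_le_card fun s hs => mem_powersetCard.2 ⟨subset_univ s, ?_⟩
  obtain ⟨φ, rfl⟩ := mem_inducedCopies_iff.1 hs
  simp

lemma inducedCount_comap_succAboveEmb {n : ℕ} (G : SimpleGraph (Fin (n + 1))) (v : Fin (n + 1)) :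
    inducedCount F (G.comap v.succAboveEmb) = #{s ∈ inducedCopies F G | v ∉ s} := by
  rw [inducedCount_eq_card_inducedCopies, ← card_map (mapEmbedding v.succAboveEmb).toEmbedding]
  congr 1
  ext s
  simp only [Finset.mem_map, RelEmbedding.coe_toEmbedding, mapEmbedding_apply, mem_filter]
  constructor
  · rintro ⟨s, hs, rfl⟩
    exact ⟨map_mem_inducedCopies (Embedding.comap _ G) hs, by simp [Fin.succAbove_ne]⟩
  · rintro ⟨hs, hvs⟩
    obtain ⟨φ, rfl⟩ := mem_inducedCopies_iff.1 hs
    have hφ (a : α) : φ a ≠ v := fun h => hvs (h ▸ mem_map_of_mem _ (mem_univ a))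
    choose g hg using fun a => Fin.exists_succAbove_eq (hφ a)
    let ψ : F ↪g G.comap v.succAboveEmb :=
      { toFun := g
        inj' := fun a b h => φ.injective (by rw [← hg a, ← hg b, h])
        map_rel_iff' := fun {a b} => by
          change G.Adj (v.succAbove (g a)) (v.succAbove (g b)) ↔ _
          rw [hg, hg, φ.map_adj_iff] }
    refine ⟨univ.map ψ.toEmbedding, mem_inducedCopies_iff.2 ⟨ψ, rfl⟩, ?_⟩
    rw [Finset.map_map]
    congr 1
    ext a
    exact congrArg Fin.val (hg a)

end InducedCopies

section VertexDeletion

variable {α : Type*} [Fintype α] {F : SimpleGraph α}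

lemma sum_inducedCount_comap_succAboveEmb {n : ℕ} (G : SimpleGraph (Fin (n + 1))) :
    ∑ v : Fin (n + 1), inducedCount F (G.comap v.succAboveEmb) =
      (n + 1 - Fintype.card α) * inducedCount F G := by
  have hcompl (s : Finset (Fin (n + 1))) (hs : s ∈ inducedCopies F G) :
      #{v | v ∉ s} = n + 1 - Fintype.card α := by
    obtain ⟨φ, rfl⟩ := mem_inducedCopies_iff.1 hs
    rw [filter_not, filter_mem_eq_inter, univ_inter, card_sdiff_of_subset (subset_univ _)]
    simp
  simp_rw [inducedCount_comap_succAboveEmb, inducedCount_eq_card_inducedCopies]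
  calc ∑ v, #{s ∈ inducedCopies F G | v ∉ s}
      = ∑ s ∈ inducedCopies F G, #{v | v ∉ s} :=
        sum_card_bipartiteAbove_eq_sum_card_bipartiteBelow (fun v s => v ∉ s)
    _ = _ := by rw [sum_congr rfl hcompl, sum_const, smul_eq_mul, mul_comm]

lemma exists_inducedDensity_le_comap_succAboveEmb {n : ℕ} (hn : Fintype.card α ≤ n)
    (G : SimpleGraph (Fin (n + 1))) :
    ∃ v : Fin (n + 1), inducedDensity F G ≤ inducedDensity F (G.comap v.succAboveEmb) := by
  set r := Fintype.card α
  have hchoose : (n.choose r * (n + 1) : ℝ) = (n + 1).choose r * ((n + 1 - r : ℕ) : ℝ) := by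
    exact_mod_cast Nat.choose_mul_succ_eq n r
  have hpos : (0 : ℝ) < n.choose r := by exact_mod_cast Nat.choose_pos hn
  have hpos' : (0 : ℝ) < (n + 1).choose r := by exact_mod_cast Nat.choose_pos (by omega)
  have hsum : ∑ _v : Fin (n + 1), inducedDensity F G =
      ∑ v : Fin (n + 1), inducedDensity F (G.comap v.succAboveEmb) := by
    simp only [inducedDensity, Fintype.card_fin, ← sum_div, sum_const, card_univ, nsmul_eq_mul]
    rw [← Nat.cast_sum, sum_inducedCount_comap_succAboveEmb, Nat.cast_mul, div_eq_div_iff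
      hpos'.ne' hpos.ne']
    push_cast
    linear_combination (inducedCount F G : ℝ) * hchoose
  obtain ⟨v, -, hv⟩ := exists_le_of_sum_le univ_nonempty hsum.le
  exact ⟨v, hv⟩

end VertexDeletion

section Inducibility

variable {α : Type*} [Fintype α] (F : SimpleGraph α)

lemma inducedDensity_le_one {β : Type*} [Fintype β] (G : SimpleGraph β) :
    inducedDensity F G ≤ 1 :=
  div_le_one_of_le₀ (by exact_mod_cast inducedCount_le_choose (F := F) G) (Nat.cast_nonneg _)

lemma ikn_nonneg (k n : ℕ) : 0 ≤ ikn F k n :=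
  Real.sSup_nonneg <| by
    rintro x ⟨G, -, rfl⟩
    exact div_nonneg (Nat.cast_nonneg _) (Nat.cast_nonneg _)

lemma ikn_le_one (k n : ℕ) : ikn F k n ≤ 1 :=
  Real.sSup_le (by rintro x ⟨G, -, rfl⟩; exact inducedDensity_le_one F G) zero_le_one

lemma inducedDensity_le_ikn {k n : ℕ} {G : SimpleGraph (Fin n)} (hG : G.CliqueFree k) :
    inducedDensity F G ≤ ikn F k n :=
  le_csSup ⟨1, by rintro x ⟨G, -, rfl⟩; exact inducedDensity_le_one F G⟩ ⟨G, hG, rfl⟩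

lemma ikn_succ_le {k n : ℕ} (hn : Fintype.card α ≤ n) : ikn F k (n + 1) ≤ ikn F k n := by
  refine Real.sSup_le ?_ (ikn_nonneg F k n)
  rintro x ⟨G, hG, rfl⟩
  obtain ⟨v, hv⟩ := exists_inducedDensity_le_comap_succAboveEmb (F := F) hn G
  exact hv.trans <| inducedDensity_le_ikn F <|
    hG.comap (Embedding.comap v.succAboveEmb G).toCopy.isContained

lemma tendsto_ikn (k : ℕ) :
    Tendsto (ikn F k) atTop (𝓝 (⨅ m, ikn F k (m + Fintype.card α))) := by
  have hanti : Antitone fun m => ikn F k (m + Fintype.card α) :=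
    antitone_nat_of_succ_le fun m => by
      rw [Nat.add_right_comm]
      exact ikn_succ_le F (Nat.le_add_left _ _)
  have hbdd : BddBelow (Set.range fun m => ikn F k (m + Fintype.card α)) :=
    ⟨0, by rintro x ⟨m, rfl⟩; exact ikn_nonneg F k _⟩
  exact (tendsto_add_atTop_iff_nat _).1 (tendsto_atTop_ciInf hanti hbdd)

lemma ik_le_one (k : ℕ) : ik F k ≤ 1 := by
  rw [ik, (tendsto_ikn F k).limUnder_eq]
  exact le_of_tendsto' (tendsto_ikn F k) fun n => ikn_le_one F k n

lemma le_ik_of_tendsto {k : ℕ} {φ : ℕ → ℕ} (hφ : Tendsto φ atTop atTop) {z : ℝ}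
    (hz : ∀ᶠ t in atTop, z ≤ ikn F k (φ t)) : z ≤ ik F k := by
  rw [ik, (tendsto_ikn F k).limUnder_eq]
  exact ge_of_tendsto ((tendsto_ikn F k).comp hφ) hz

end Inducibility

namespace SimpleGraph

variable {α β : Type*} (F : SimpleGraph α) (G : SimpleGraph β)

def lexProd : SimpleGraph (α × β) where
  Adj p q := F.Adj p.1 q.1 ∨ (p.1 = q.1 ∧ G.Adj p.2 q.2)
  symm := ⟨fun p q => by
    rintro (h | ⟨h₁, h₂⟩)
    exacts [Or.inl h.symm, Or.inr ⟨h₁.symm, h₂.symm⟩]⟩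
  loopless := ⟨fun p => by rintro (h | ⟨-, h⟩); exacts [F.irrefl h, G.irrefl h]⟩

@[simps]
def Embedding.lexProdSection (h : α → β) : F ↪g F.lexProd G where
  toFun a := (a, h a)
  inj' _ _ hab := congrArg Prod.fst hab
  map_rel_iff' {a b} := by
    change F.Adj a b ∨ (a = b ∧ G.Adj (h a) (h b)) ↔ _
    exact or_iff_left fun ⟨hab, hadj⟩ => G.irrefl (hab ▸ hadj)

@[simps]
def Embedding.lexProdFiber (a : α) : G ↪g F.lexProd G where
  toFun b := (a, b)
  inj' _ _ hab := congrArg Prod.snd hab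
  map_rel_iff' {b b'} := by
    change F.Adj a a ∨ (a = a ∧ G.Adj b b') ↔ _
    simp

variable {F G}

lemma Colorable.lexProd [Fintype α] {n : ℕ} (hG : G.Colorable n) :
    (F.lexProd G).Colorable (Fintype.card α * n) := by
  obtain ⟨c⟩ := hG
  have := (Coloring.mk (fun p => (p.1, c p.2)) fun {p q} hpq => by
    rcases hpq with h | ⟨-, h⟩
    exacts [fun he => h.ne (Prod.mk.inj he).1, fun he => c.valid h (Prod.mk.inj he).2] :
      (F.lexProd G).Coloring (α × Fin n)).colorable
  simpa using this

end SimpleGraph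

section LexProd

variable {α β : Type*} [Fintype α] [Fintype β] {F : SimpleGraph α}

lemma card_pow_add_mul_inducedCount_le_lexProd (hα : 1 < Fintype.card α) (G : SimpleGraph β) :
    Fintype.card β ^ Fintype.card α + Fintype.card α * inducedCount F G ≤
      inducedCount F (F.lexProd G) := by
  classical
  let Φ : (α → β) ⊕ (α × Finset β) → Finset (α × β) :=
    Sum.elim (fun h => univ.map (Embedding.lexProdSection F G h).toEmbedding)
      (fun p => p.2.map (Embedding.lexProdFiber F G p.1).toEmbedding)
  have hfst_section (h : α → β) : (Φ (.inl h)).image Prod.fst = univ := by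
    ext a; simp [Φ]
  have hfst_fiber (a : α) {s : Finset β} (hs : s.Nonempty) :
      (Φ (.inr (a, s))).image Prod.fst = {a} := by
    simpa [Φ, map_eq_image, image_image, Function.comp_def] using image_const hs a
  let D : Finset ((α → β) ⊕ (α × Finset β)) := univ.disjSum (univ ×ˢ inducedCopies F G)
  have hcopy {a : α} {s : Finset β} (hp : .inr (a, s) ∈ D) : s ∈ inducedCopies F G :=
    (mem_product.1 (inr_mem_disjSum.1 hp)).2
  have hnonempty {a : α} {s : Finset β} (hp : .inr (a, s) ∈ D) : s.Nonempty := by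
    obtain ⟨φ, rfl⟩ := mem_inducedCopies_iff.1 (hcopy hp)
    have : Nonempty α := Fintype.card_pos_iff.1 (by omega)
    exact univ_nonempty.map
  have huniv (a : α) : (univ : Finset α) ≠ {a} := fun h =>
    hα.ne' (by rw [← card_univ, h, card_singleton])
  have hmaps : Set.MapsTo Φ D (inducedCopies F (F.lexProd G)) := by
    rintro (h | ⟨a, s⟩) hp
    · exact mem_inducedCopies_iff.2 ⟨_, rfl⟩
    · exact map_mem_inducedCopies _ (hcopy hp)
  have hinj : Set.InjOn Φ D := by
    rintro (h | ⟨a, s⟩) hp (h' | ⟨a', s'⟩) hp' heq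
    · congr 1
      funext a
      have hmem : (a, h a) ∈ Φ (.inl h') := heq ▸ mem_map_of_mem _ (mem_univ a)
      simpa [Φ, eq_comm] using hmem
    · exact (huniv a' ((hfst_section h).symm.trans (heq ▸ hfst_fiber a' (hnonempty hp')))).elim
    · exact (huniv a ((hfst_section h').symm.trans (heq ▸ hfst_fiber a (hnonempty hp)))).elim
    · obtain rfl : a = a' := singleton_inj.1 <|
        (hfst_fiber a (hnonempty hp)).symm.trans (heq ▸ hfst_fiber a' (hnonempty hp'))
      rw [show s = s' from Finset.map_injective _ heq]
  calc Fintype.card β ^ Fintype.card α + Fintype.card α * inducedCount F G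
      = #D := by
        rw [inducedCount_eq_card_inducedCopies, card_disjSum, card_product, card_univ, card_univ,
          Fintype.card_fun]
    _ ≤ #(inducedCopies F (F.lexProd G)) := card_le_card_of_injOn Φ hmaps hinj
    _ = inducedCount F (F.lexProd G) := (inducedCount_eq_card_inducedCopies _).symm

end LexProd

section TupleDensity

variable {α β γ : Type*} [Fintype α] [Fintype β] [Fintype γ] (F : SimpleGraph α)

/-- `P(F,G) r!/n^r`: the probability that `r = |V(F)|` independent uniform vertices of `G` are
distinct and induce a copy of `F`. -/
noncomputable def tupleDensity (G : SimpleGraph β) : ℝ :=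
  inducedCount F G * (Fintype.card α).factorial / (Fintype.card β : ℝ) ^ Fintype.card α

variable {F}

lemma tupleDensity_nonneg (G : SimpleGraph β) : 0 ≤ tupleDensity F G := by
  unfold tupleDensity
  positivity

lemma tupleDensity_le_inducedDensity (G : SimpleGraph β) :
    tupleDensity F G ≤ inducedDensity F G := by
  set N := Fintype.card β
  set r := Fintype.card α
  rcases (N.choose r).eq_zero_or_pos with hC | hC
  · have hP : inducedCount F G = 0 := Nat.eq_zero_of_le_zero (hC ▸ inducedCount_le_choose G)
    simp [tupleDensity, inducedDensity, hP]
  calc tupleDensity F G = inducedCount F G / ((N : ℝ) ^ r / r.factorial) :=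
        (div_div_eq_mul_div _ _ _).symm
    _ ≤ inducedDensity F G :=
        div_le_div_of_nonneg_left (Nat.cast_nonneg _) (by exact_mod_cast hC)
          (Nat.choose_le_pow_div r N)

lemma SimpleGraph.Iso.tupleDensity_eq {G : SimpleGraph β} {G' : SimpleGraph γ} (e : G ≃g G') :
    tupleDensity F G = tupleDensity F G' := by
  rw [tupleDensity, tupleDensity, e.inducedCount_eq, Fintype.card_congr e.toEquiv]

lemma tupleDensity_lexProd (hα : 1 < Fintype.card α) (G : SimpleGraph β) [Nonempty β] :
    ((Fintype.card α).factorial : ℝ) / (Fintype.card α : ℝ) ^ Fintype.card α +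
        Fintype.card α / (Fintype.card α : ℝ) ^ Fintype.card α * tupleDensity F G ≤
      tupleDensity F (F.lexProd G) := by
  set r := Fintype.card α
  set N := Fintype.card β
  have hcount : ((N : ℝ) ^ r + r * inducedCount F G) ≤ inducedCount F (F.lexProd G) := by
    exact_mod_cast card_pow_add_mul_inducedCount_le_lexProd hα G
  have hN : (0 : ℝ) < N := by exact_mod_cast Fintype.card_pos
  have hr : (0 : ℝ) < r := by exact_mod_cast zero_lt_one.trans hα
  rw [tupleDensity, tupleDensity, Fintype.card_prod]
  calc (r.factorial : ℝ) / (r : ℝ) ^ r +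
        r / (r : ℝ) ^ r * (inducedCount F G * r.factorial / (N : ℝ) ^ r)
      = ((N : ℝ) ^ r + r * inducedCount F G) * r.factorial / ((r * N : ℕ) : ℝ) ^ r := by
        push_cast
        field_simp
        ring
    _ ≤ _ := by gcongr

end TupleDensity

lemma mul_one_sub_pow_le_of_le_add_mul {q : ℕ → ℝ} {L x : ℝ} (hx : 0 ≤ x) (h0 : 0 ≤ q 0)
    (hq : ∀ d, L * (1 - x) + x * q d ≤ q (d + 1)) (d : ℕ) : L * (1 - x ^ d) ≤ q d := by
  induction d with
  | zero => simpa using h0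
  | succ d ih =>
    calc L * (1 - x ^ (d + 1)) = L * (1 - x) + x * (L * (1 - x ^ d)) := by ring
      _ ≤ L * (1 - x) + x * q d := by gcongr
      _ ≤ q (d + 1) := hq d

section IteratedLexProd

variable {r : ℕ} (F : SimpleGraph (Fin r)) (t : ℕ)

/-- `F[F[⋯F[K̄_t]⋯]]` with `d` factors `F`, where `K̄_t` is the edgeless graph on `t` vertices. -/
def iterLexProd : (d : ℕ) → SimpleGraph (Fin (r ^ d * t))
  | 0 => ⊥
  | d + 1 => (F.lexProd (iterLexProd d)).comap
      ((finCongr (by ring)).trans finProdFinEquiv.symm : Fin (r ^ (d + 1) * t) ≃ _)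

lemma iterLexProd_colorable (d : ℕ) : (iterLexProd F t d).Colorable (r ^ d) := by
  induction d with
  | zero => exact colorable_one_iff.2 rfl |>.mono (by simp)
  | succ d ih =>
    rw [iterLexProd]
    exact ((Colorable.lexProd ih).of_hom (Iso.comap _ _).toEmbedding.toHom).mono
      (by rw [Fintype.card_fin, pow_succ'])

variable {F t}

lemma tupleDensity_iterLexProd (hr : 2 ≤ r) (ht : 1 ≤ t) (d : ℕ) :
    (r.factorial : ℝ) / ((r : ℝ) ^ r - r) * (1 - ((r : ℝ) / (r : ℝ) ^ r) ^ d) ≤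
      tupleDensity F (iterLexProd F t d) := by
  have hrr : (r : ℝ) ^ r - r ≠ 0 :=
    sub_ne_zero.2 (by exact_mod_cast (Nat.lt_pow_self (by omega : 1 < r)).ne')
  refine mul_one_sub_pow_le_of_le_add_mul (q := fun d => tupleDensity F (iterLexProd F t d))
    (by positivity) (tupleDensity_nonneg _) (fun d => ?_) d
  have : Nonempty (Fin (r ^ d * t)) := ⟨⟨0, by positivity⟩⟩
  have hstep := tupleDensity_lexProd (F := F) (by rw [Fintype.card_fin]; omega) (iterLexProd F t d)
  simp only [Fintype.card_fin] at hstep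
  rw [iterLexProd, (Iso.comap _ _).tupleDensity_eq]
  convert hstep using 2
  field_simp

end IteratedLexProd

lemma le_ik_pow_add_one {r : ℕ} (hr : 2 ≤ r) (F : SimpleGraph (Fin r)) (d : ℕ) :
    (r.factorial : ℝ) / ((r : ℝ) ^ r - r) * (1 - ((r : ℝ) / (r : ℝ) ^ r) ^ d) ≤
      ik F (r ^ d + 1) := by
  refine le_ik_of_tendsto F (φ := fun t => r ^ d * t)
    (tendsto_id.const_mul_atTop' (by positivity)) ?_
  filter_upwards [eventually_ge_atTop 1] with t ht
  exact (tupleDensity_iterLexProd hr ht d).trans <| (tupleDensity_le_inducedDensity _).trans <|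
    inducedDensity_le_ikn F ((iterLexProd_colorable F t d).cliqueFree (Nat.lt_succ_self _))

/-- For every graph `F` on `r ≥ 2` vertices and every real `z < r!/(r^r - r)` there is
`k ≥ 2` with `i_k(F) ≥ z`; consequently `sup_k i_k(F) ≥ r!/(r^r - r)`. -/
theorem stmt3 {r : ℕ} (hr : 2 ≤ r) (F : SimpleGraph (Fin r)) :
    (∀ z : ℝ, z < (r.factorial : ℝ) / ((r : ℝ) ^ r - r) →
      ∃ k : ℕ, 2 ≤ k ∧ z ≤ ik F k) ∧
    (r.factorial : ℝ) / ((r : ℝ) ^ r - r) ≤ ⨆ k : ℕ, ik F k := by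
  set L := (r.factorial : ℝ) / ((r : ℝ) ^ r - r)
  have hx₀ : 0 ≤ (r : ℝ) / (r : ℝ) ^ r := by positivity
  have hx₁ : (r : ℝ) / (r : ℝ) ^ r < 1 :=
    (div_lt_one (by positivity)).2 (by exact_mod_cast Nat.lt_pow_self (by omega : 1 < r))
  have hlim : Tendsto (fun d => L * (1 - ((r : ℝ) / (r : ℝ) ^ r) ^ d)) atTop (𝓝 L) := by
    simpa using ((tendsto_pow_atTop_nhds_zero_of_lt_one hx₀ hx₁).const_sub 1).const_mul L
  have hexists (z : ℝ) (hz : z < L) : ∃ k : ℕ, 2 ≤ k ∧ z ≤ ik F k := by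
    obtain ⟨d, hd⟩ := (hlim.eventually (lt_mem_nhds hz)).exists
    exact ⟨r ^ d + 1, by have := Nat.one_le_pow d r (by omega); omega,
      hd.le.trans (le_ik_pow_add_one hr F d)⟩
  refine ⟨hexists, le_of_forall_lt_imp_le_of_dense fun z hz => ?_⟩
  obtain ⟨k, -, hk⟩ := hexists z hz
  exact hk.trans (le_ciSup ⟨1, by rintro _ ⟨k, rfl⟩; exact ik_le_one F k⟩ k)
end

section
/- For all sufficiently large r, the number of graphs on the labeled vertex set {1,…,r} that are robust is at least (1 − 3/r)·2^{r(r−1)/2}. In particular, asymptotically almost surely a uniformly random graph on r vertices is robust. -/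
/-!
A graph that is not robust has a *module* `M` with `2 ≤ |M| ≤ r - 1`, i.e. a set of vertices
all of which are adjacent to the same vertices outside `M`: any part of size at least two of
the offending partition will do. Fixing a vertex `u ∈ M`, such a graph is determined by its
restrictions to `M` and to `{u} ∪ Mᶜ`, so at most `2 ^ (C(r, 2) - (k - 1)(r - k))` graphs have
a given module of size `k`. Summing over the `C(r, k)` choices of `M` and over `k`, at most
`2 ^ C(r, 2) / r ^ 2` graphs are not robust as soon as `r ^ 10 ≤ 2 ^ (r - 1)`.
-/

open Filter Topology

/-- A graph `F` on `r` vertices is robust if there is no partition of its vertex set into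
`s` nonempty parts, `2 ≤ s ≤ r-1`, such that between any two distinct parts the bipartite
graph is complete or empty. -/
def Robust {r : ℕ} (F : SimpleGraph (Fin r)) : Prop :=
  ¬ ∃ P : Finpartition (Finset.univ : Finset (Fin r)),
      2 ≤ P.parts.card ∧ P.parts.card ≤ r - 1 ∧
      ∀ X ∈ P.parts, ∀ Y ∈ P.parts, X ≠ Y →
        ((∀ x ∈ X, ∀ y ∈ Y, F.Adj x y) ∨ (∀ x ∈ X, ∀ y ∈ Y, ¬ F.Adj x y))

open Finset SimpleGraph

def SimpleGraph.IsModule {V : Type*} (G : SimpleGraph V) (M : Finset V) : Prop :=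
  ∀ x ∈ M, ∀ y ∈ M, ∀ w ∉ M, (G.Adj x w ↔ G.Adj y w)

theorem exists_isModule_of_not_robust {r : ℕ} {G : SimpleGraph (Fin r)} (hG : ¬ Robust G) :
    ∃ M : Finset (Fin r), 2 ≤ #M ∧ #M ≤ r - 1 ∧ G.IsModule M := by
  obtain ⟨P, hs, hsr, hhom⟩ := not_not.1 hG
  obtain ⟨M, hM, hM2⟩ : ∃ M ∈ P.parts, 1 < #M := by
    refine exists_lt_of_sum_lt ?_
    rw [sum_const, smul_eq_mul, mul_one, P.sum_card_parts, card_univ, Fintype.card_fin]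
    omega
  obtain ⟨Y, hY, hYM⟩ := exists_mem_ne (by omega : 1 < #P.parts) M
  obtain ⟨y, hy⟩ := P.nonempty_of_mem_parts hY
  have hyM : y ∉ M := disjoint_left.1 (P.disjoint hY hM hYM) hy
  have hMr : #M < r := by
    simpa using card_lt_card (ssubset_iff_of_subset (subset_univ M) |>.2 ⟨y, mem_univ y, hyM⟩)
  refine ⟨M, hM2, by omega, fun x hx x' hx' w hw => ?_⟩
  obtain ⟨W, hW, hwW⟩ := P.exists_mem (mem_univ w)
  rcases hhom M hM W hW (by rintro rfl; exact hw hwW) with hall | hnone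
  · exact iff_of_true (hall x hx w hwW) (hall x' hx' w hwW)
  · exact iff_of_false (hnone x hx w hwW) (hnone x' hx' w hwW)

theorem card_simpleGraph (V : Type*) [Fintype V] [DecidableEq V] :
    Fintype.card (SimpleGraph V) = 2 ^ (Fintype.card V).choose 2 := by
  classical
  rw [← card_edgeFinset_top_eq_card_choose_two, ← card_powerset, ← card_univ]
  refine card_bij (fun G _ => G.edgeFinset) (fun G _ => mem_powerset.2 (edgeFinset_mono le_top))
    (fun G _ H _ h => edgeFinset_inj.1 h) (fun s hs => ⟨fromEdgeSet s, mem_univ _, ?_⟩)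
  ext e
  have := @mem_powerset.1 hs e
  simp_all

theorem SimpleGraph.adj_iff_of_induce_eq {V : Type*} {s : Set V} {G₁ G₂ : SimpleGraph V}
    (h : G₁.induce s = G₂.induce s) {x y : V} (hx : x ∈ s) (hy : y ∈ s) :
    G₁.Adj x y ↔ G₂.Adj x y := by
  simpa using congrArg (fun H : SimpleGraph s => H.Adj ⟨x, hx⟩ ⟨y, hy⟩) h

theorem card_isModule_le {V : Type*} [Fintype V] [DecidableEq V] {M : Finset V} {u : V}
    (hu : u ∈ M) :
    Nat.card {G : SimpleGraph V // G.IsModule M} ≤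
      2 ^ ((#M).choose 2 + (Fintype.card V - #M + 1).choose 2) := by
  set N : Finset V := insert u Mᶜ
  have hinj : Function.Injective fun G : {G : SimpleGraph V // G.IsModule M} =>
      (G.1.induce (M : Set V), G.1.induce (N : Set V)) := by
    rintro ⟨G₁, hG₁⟩ ⟨G₂, hG₂⟩ h
    obtain ⟨hM, hN⟩ := Prod.ext_iff.1 h
    have mixed : ∀ x y, x ∈ M → y ∉ M → (G₁.Adj x y ↔ G₂.Adj x y) := fun x y hx hy => by
      have hyN : y ∈ N := mem_insert_of_mem (mem_compl.2 hy)
      rw [hG₁ x hx u hu y hy, hG₂ x hx u hu y hy]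
      exact adj_iff_of_induce_eq hN (mem_insert_self u _) hyN
    refine Subtype.ext (SimpleGraph.ext (funext₂ fun x y => propext ?_))
    by_cases hx : x ∈ M <;> by_cases hy : y ∈ M
    · exact adj_iff_of_induce_eq hM hx hy
    · exact mixed x y hx hy
    · rw [adj_comm, mixed y x hy hx, adj_comm]
    · exact adj_iff_of_induce_eq hN (mem_insert_of_mem (mem_compl.2 hx))
        (mem_insert_of_mem (mem_compl.2 hy))
  have hN : #N = Fintype.card V - #M + 1 := by
    rw [card_insert_of_notMem (by simpa using hu), card_compl]
  calc Nat.card {G : SimpleGraph V // G.IsModule M}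
      ≤ Nat.card (SimpleGraph (M : Set V) × SimpleGraph (N : Set V)) :=
        Nat.card_le_card_of_injective _ hinj
    _ = _ := by
        rw [Nat.card_eq_fintype_card, Fintype.card_prod, card_simpleGraph, card_simpleGraph]
        simp only [coe_sort_coe, Fintype.card_coe, hN, pow_add]

theorem card_not_robust_le (r : ℕ) :
    Nat.card {G : SimpleGraph (Fin r) // ¬ Robust G} ≤
      ∑ k ∈ Icc 2 (r - 1), r.choose k * 2 ^ (k.choose 2 + (r - k + 1).choose 2) := by
  classical
  have hcover : (univ.filter fun G : SimpleGraph (Fin r) => ¬ Robust G) ⊆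
      (Icc 2 (r - 1)).biUnion fun k =>
        (powersetCard k univ).biUnion fun M => univ.filter (·.IsModule M) := by
    intro G hG
    obtain ⟨M, hM2, hMr, hMod⟩ := exists_isModule_of_not_robust (mem_filter.1 hG).2
    simp only [mem_biUnion, mem_Icc, mem_powersetCard, mem_filter]
    exact ⟨#M, ⟨hM2, hMr⟩, M, ⟨subset_univ M, rfl⟩, mem_univ G, hMod⟩
  rw [Nat.card_eq_fintype_card, Fintype.card_subtype]
  refine (card_le_card hcover).trans (card_biUnion_le.trans (sum_le_sum fun k hk => ?_))
  refine (card_biUnion_le_card_mul _ _ _ fun M hM => ?_).trans_eq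
    (by rw [card_powersetCard, card_univ, Fintype.card_fin])
  obtain ⟨-, hMk⟩ := mem_powersetCard.1 hM
  obtain ⟨u, hu⟩ : M.Nonempty := card_pos.1 (by have := (mem_Icc.1 hk).1; omega)
  simpa [hMk, ← Fintype.card_subtype] using card_isModule_le hu

theorem Nat.choose_two_eq_add {k r : ℕ} (hk : 1 ≤ k) (hkr : k ≤ r) :
    r.choose 2 = k.choose 2 + (r - k + 1).choose 2 + (k - 1) * (r - k) := by
  obtain ⟨j, rfl⟩ := Nat.exists_eq_add_of_le' hk
  obtain ⟨m, rfl⟩ := Nat.exists_eq_add_of_le hkr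
  rw [Nat.add_sub_cancel_left, Nat.add_sub_cancel]
  qify
  simp only [Nat.cast_choose_two]
  push_cast
  ring

theorem Nat.choose_le_pow_min_succ {r k : ℕ} (hk : 1 ≤ k) (hkr : k ≤ r) :
    r.choose k ≤ r ^ (min (k - 1) (r - k) + 1) := by
  rcases le_total (k - 1) (r - k) with h | h
  · rw [min_eq_left h, Nat.sub_add_cancel hk]
    exact r.choose_le_pow k
  · rw [min_eq_right h, ← Nat.choose_symm hkr]
    exact (r.choose_le_pow _).trans (Nat.pow_le_pow_right (by omega) (Nat.le_succ _))

/-- Writing `a ≤ b` for the two factors of `(k - 1) * (r - k)`, we have `C(r, k) ≤ r ^ (a + 1)`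
and `2 * b ≥ r - 1`, so `r ^ 3 * C(r, k) ≤ (r ^ 5) ^ a ≤ 2 ^ (a * b)`. -/
theorem pow_three_mul_choose_le {r k : ℕ} (hr : r ^ 10 ≤ 2 ^ (r - 1)) (hk : 2 ≤ k)
    (hkr : k ≤ r - 1) :
    r ^ 3 * r.choose k ≤ 2 ^ ((k - 1) * (r - k)) := by
  set a := min (k - 1) (r - k)
  set b := max (k - 1) (r - k)
  have ha : 1 ≤ a := le_min (by omega) (by omega)
  have hb : r - 1 ≤ 2 * b := by omega
  have hr5 : r ^ 5 ≤ 2 ^ b := by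
    refine (Nat.pow_le_pow_iff_left two_ne_zero).1 ?_
    calc (r ^ 5) ^ 2 = r ^ 10 := by ring
      _ ≤ 2 ^ (2 * b) := hr.trans (Nat.pow_le_pow_right two_pos hb)
      _ = (2 ^ b) ^ 2 := by ring
  calc r ^ 3 * r.choose k
      ≤ r ^ 3 * r ^ (a + 1) :=
        Nat.mul_le_mul_left _ (Nat.choose_le_pow_min_succ (by omega) (by omega))
    _ = r ^ (a + 4) := by ring
    _ ≤ r ^ (5 * a) := Nat.pow_le_pow_right (by omega) (by omega)
    _ = (r ^ 5) ^ a := pow_mul r 5 a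
    _ ≤ (2 ^ b) ^ a := Nat.pow_le_pow_left hr5 a
    _ = 2 ^ ((k - 1) * (r - k)) := by rw [← pow_mul, mul_comm, min_mul_max]

theorem sq_mul_card_not_robust_le {r : ℕ} (hr : r ^ 10 ≤ 2 ^ (r - 1)) :
    r ^ 2 * Nat.card {G : SimpleGraph (Fin r) // ¬ Robust G} ≤ 2 ^ r.choose 2 := by
  rcases Nat.eq_zero_or_pos r with rfl | hr0
  · simp
  refine Nat.le_of_mul_le_mul_left ?_ hr0
  calc r * (r ^ 2 * Nat.card {G : SimpleGraph (Fin r) // ¬ Robust G})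
      = r ^ 3 * Nat.card {G : SimpleGraph (Fin r) // ¬ Robust G} := by ring
    _ ≤ ∑ k ∈ Icc 2 (r - 1), r ^ 3 * (r.choose k * 2 ^ (k.choose 2 + (r - k + 1).choose 2)) := by
        rw [← mul_sum]
        exact Nat.mul_le_mul_left _ (card_not_robust_le r)
    _ ≤ ∑ _k ∈ Icc 2 (r - 1), 2 ^ r.choose 2 := sum_le_sum fun k hk => by
        obtain ⟨hk2, hkr⟩ := mem_Icc.1 hk
        rw [← mul_assoc, Nat.choose_two_eq_add (by omega : 1 ≤ k) (by omega : k ≤ r),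
          pow_add 2 (_ + _), mul_comm (2 ^ (_ + _))]
        exact Nat.mul_le_mul_right _ (pow_three_mul_choose_le hr hk2 hkr)
    _ ≤ r * 2 ^ r.choose 2 := by
        rw [sum_const, Nat.card_Icc, smul_eq_mul]
        exact Nat.mul_le_mul_right _ (by omega)

theorem eventually_pow_ten_le_two_pow_pred : ∀ᶠ r : ℕ in atTop, r ^ 10 ≤ 2 ^ (r - 1) := by
  filter_upwards [(tendsto_pow_const_div_const_pow_of_one_lt 10 one_lt_two).eventually_lt_const
    one_half_pos, eventually_ge_atTop 1] with r hr hr1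
  rw [div_lt_iff₀ (by positivity)] at hr
  have : 2 * r ^ 10 < 2 * 2 ^ (r - 1) := by
    rw [← pow_succ', Nat.sub_add_cancel hr1]
    exact_mod_cast (by linarith : 2 * (r : ℝ) ^ 10 < 2 ^ r)
  omega

theorem card_robust_add_card_not_robust (r : ℕ) :
    Nat.card {G : SimpleGraph (Fin r) // Robust G} +
      Nat.card {G : SimpleGraph (Fin r) // ¬ Robust G} = 2 ^ r.choose 2 := by
  classical
  rw [Nat.card_eq_fintype_card, Nat.card_eq_fintype_card, Fintype.card_subtype,
    Fintype.card_subtype, card_filter_add_card_filter_not, card_univ, card_simpleGraph,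
    Fintype.card_fin]

theorem eventually_card_robust_ge : ∀ᶠ r : ℕ in atTop,
    (1 - 3 / (r : ℝ)) * 2 ^ r.choose 2 ≤ Nat.card {G : SimpleGraph (Fin r) // Robust G} := by
  filter_upwards [eventually_pow_ten_le_two_pow_pred, eventually_ge_atTop 1] with r hr hr1
  have hsum := card_robust_add_card_not_robust r
  have hsq := sq_mul_card_not_robust_le hr
  generalize Nat.card {G : SimpleGraph (Fin r) // Robust G} = R at hsum ⊢
  generalize Nat.card {G : SimpleGraph (Fin r) // ¬ Robust G} = N at hsum hsq
  have hsum' : (R : ℝ) + N = 2 ^ r.choose 2 := by exact_mod_cast hsum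
  have hsq' : (r : ℝ) ^ 2 * N ≤ 2 ^ r.choose 2 := by exact_mod_cast hsq
  have hr1' : (1 : ℝ) ≤ r := by exact_mod_cast hr1
  have hN : (N : ℝ) ≤ 3 / r * 2 ^ r.choose 2 := by
    rw [div_mul_eq_mul_div, le_div_iff₀ (by positivity)]
    nlinarith
  linarith

/-- For all sufficiently large `r`, at least a `(1 - 3/r)`-fraction of the `2^(r(r-1)/2)`
labeled graphs on `r` vertices are robust; in particular a.a.s. a uniformly random graph
on `r` vertices is robust. -/
theorem stmt4 :
    (∃ r0 : ℕ, ∀ r : ℕ, r0 ≤ r →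
      (1 - 3 / (r : ℝ)) * 2 ^ (r * (r - 1) / 2) ≤
        (Nat.card {G : SimpleGraph (Fin r) // Robust G} : ℝ)) ∧
    Tendsto (fun r : ℕ =>
      (Nat.card {G : SimpleGraph (Fin r) // Robust G} : ℝ) / 2 ^ (r * (r - 1) / 2))
      atTop (𝓝 1) := by
  simp only [← Nat.choose_two_right]
  refine ⟨eventually_atTop.1 eventually_card_robust_ge, ?_⟩
  have hlow : Tendsto (fun r : ℕ => 1 - 3 / (r : ℝ)) atTop (𝓝 1) := by
    simpa using tendsto_const_nhds.sub (tendsto_const_div_atTop_nhds_zero_nat (3 : ℝ))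
  refine tendsto_of_tendsto_of_tendsto_of_le_of_le' hlow tendsto_const_nhds ?_ ?_
  · filter_upwards [eventually_card_robust_ge] with r hr
    rwa [le_div_iff₀ (by positivity)]
  · refine Eventually.of_forall fun r => (div_le_one (by positivity)).2 ?_
    exact_mod_cast (card_robust_add_card_not_robust r).le.trans' (Nat.le_add_right _ _)
end

section
/- Let F be a symmetrizable family of finite simple graphs, all on r vertices, let k ≥ 3 and n ≥ 1. Then there exists a complete multipartite graph G on n vertices with at most k−1 parts (hence K_k-free) such that P(F,G) ≥ P(F,G') for every K_k-free graph G' on n vertices; that is, the maximum of P(F,·) over K_k-free n-vertex graphs is attained by a complete multipartite graph with fewer than k parts. -/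
open Filter Topology

/-- The number of `r`-element subsets of the vertex set of `G` that induce a subgraph
isomorphic to some member of the family `𝓕`. -/
noncomputable def famCount {r : ℕ} {β : Type*} [Fintype β]
    (𝓕 : Set (SimpleGraph (Fin r))) (G : SimpleGraph β) : ℕ :=
  Set.ncard {s : Finset β | s.card = r ∧
    ∃ F ∈ 𝓕, Nonempty (F ≃g SimpleGraph.induce (↑s : Set β) G)}

/-- `G` is `H`-free: `G` contains no subgraph isomorphic to `H` (not necessarily
induced), i.e. there is no injective graph homomorphism from `H` to `G`. -/
def HFree {γ β : Type*} (H : SimpleGraph γ) (G : SimpleGraph β) : Prop :=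
  ¬ ∃ f : γ ↪ β, ∀ a b, H.Adj a b → G.Adj (f a) (f b)

/-- `i_H(𝓕,n)`: the maximum of `p(𝓕,G)` over `H`-free graphs `G` on `n` vertices. -/
noncomputable def iHn {γ : Type*} (H : SimpleGraph γ) {r : ℕ}
    (𝓕 : Set (SimpleGraph (Fin r))) (n : ℕ) : ℝ :=
  sSup {x : ℝ | ∃ G : SimpleGraph (Fin n), HFree H G ∧
    x = (famCount 𝓕 G : ℝ) / (n.choose r)}

/-- `i_H(𝓕) = lim_{n → ∞} i_H(𝓕,n)`. -/
noncomputable def iH {γ : Type*} (H : SimpleGraph γ) {r : ℕ}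
    (𝓕 : Set (SimpleGraph (Fin r))) : ℝ :=
  limUnder atTop (fun n => iHn H 𝓕 n)

/-- The Zykov symmetrization of `F` at the (nonadjacent) pair `x, y`: the neighborhood of
`x` is replaced by that of `y`, so that `x` and `y` become nonadjacent twins. -/
def zykov {α : Type*} (F : SimpleGraph α) (x y : α) : SimpleGraph α where
  Adj a b := a ≠ b ∧
    ((a = x ∧ F.Adj y b) ∨ (b = x ∧ F.Adj a y) ∨ (a ≠ x ∧ b ≠ x ∧ F.Adj a b))
  symm := ⟨by
    rintro a b ⟨hab, h⟩
    refine ⟨hab.symm, ?_⟩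
    rcases h with ⟨h1, h2⟩ | ⟨h1, h2⟩ | ⟨h1, h2, h3⟩
    · exact Or.inr (Or.inl ⟨h1, h2.symm⟩)
    · exact Or.inl ⟨h1, h2.symm⟩
    · exact Or.inr (Or.inr ⟨h2, h1, h3.symm⟩)⟩
  loopless := ⟨fun a h => h.1 rfl⟩

/-- A family of graphs (all of the same order) is symmetrizable if it is closed under
Zykov symmetrization, up to isomorphism. -/
def Symmetrizable {r : ℕ} (𝓕 : Set (SimpleGraph (Fin r))) : Prop :=
  ∀ F ∈ 𝓕, ∀ x y : Fin r, x ≠ y → ¬ F.Adj x y →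
    ∃ F' ∈ 𝓕, Nonempty (zykov F x y ≃g F')


/-!
Zykov symmetrization. Among the `K_k`-free graphs maximizing `P(𝓕, ·)` take one, `G`, with the
most edges. For non-adjacent `s ≠ t`, giving `t` the neighbourhood of `s` keeps `G` `K_k`-free.
The `r`-sets avoiding `t` are unaffected, those through `t` but not `s` trade places with those
through `s` but not `t`, and those through both still induce a member of `𝓕` because `𝓕` is
symmetrizable; so the two symmetrizations `t ↦ s` and `s ↦ t` together lose nothing, and by
maximality each preserves `P(𝓕, G)`. Edge-maximality then forces non-adjacent vertices to have
equal degrees, and if `t ≁ s ≁ w` but `t ∼ w`, replacing first `t` and then `w` by twins of `s`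
would gain an edge. Hence non-adjacency is an equivalence relation, `G` is complete multipartite,
and a transversal of the parts is a clique, so there are at most `k - 1` parts.
-/

open Finset

namespace SimpleGraph

variable {V W : Type*}

section ReplaceVertex

variable [DecidableEq V] [DecidableEq W]

lemma zykov_eq_replaceVertex (G : SimpleGraph V) (x y : V) :
    zykov G x y = G.replaceVertex y x := by
  ext a b
  simp only [zykov, replaceVertex]
  split_ifs <;> grind [G.ne_of_adj, G.adj_comm]

def Iso.replaceVertex {G : SimpleGraph V} {H : SimpleGraph W} (e : G ≃g H) (s t : V) :
    G.replaceVertex s t ≃g H.replaceVertex (e s) (e t) where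
  toEquiv := e.toEquiv
  map_rel_iff' {a b} := by
    simp only [SimpleGraph.replaceVertex, RelIso.coe_fn_toEquiv, e.apply_eq_iff_eq, e.map_adj_iff]

variable {G : SimpleGraph V} {s t : V} {u : Finset V}

lemma induce_replaceVertex_of_notMem (ht : t ∉ u) :
    (G.replaceVertex s t).induce (u : Set V) = G.induce u := by
  ext ⟨a, ha⟩ ⟨b, hb⟩
  exact G.adj_replaceVertex_iff_of_ne s (ne_of_mem_of_not_mem ha ht) (ne_of_mem_of_not_mem hb ht)

lemma induce_replaceVertex_of_mem (hs : s ∈ u) (ht : t ∈ u) :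
    (G.replaceVertex s t).induce (u : Set V) = (G.induce u).replaceVertex ⟨s, hs⟩ ⟨t, ht⟩ := by
  ext ⟨a, ha⟩ ⟨b, hb⟩
  by_cases a = t <;> by_cases b = t <;> simp_all [replaceVertex]

def induceReplaceVertexIso (hs : s ∉ u) :
    (G.replaceVertex s t).induce (u : Set V) ≃g
      G.induce (u.map (Equiv.swap s t).toEmbedding : Set V) where
  toEquiv := (Equiv.swap s t).subtypeEquiv (by simp)
  map_rel_iff' {a b} := by
    obtain ⟨a, ha⟩ := a
    obtain ⟨b, hb⟩ := b
    have has : a ≠ s := ne_of_mem_of_not_mem ha hs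
    have hbs : b ≠ s := ne_of_mem_of_not_mem hb hs
    simp only [comap_adj, Function.Embedding.coe_subtype, Equiv.subtypeEquiv_apply,
      replaceVertex, Equiv.swap_apply_def]
    split_ifs <;> simp_all [G.adj_comm]

def IsZykovClosed (p : SimpleGraph V → Prop) : Prop :=
  ∀ ⦃G : SimpleGraph V⦄ ⦃s t : V⦄, p G → ¬G.Adj s t → p (G.replaceVertex s t)

section Finite

variable [Fintype V] [DecidableRel G.Adj] {p : SimpleGraph V → Prop} {w : V}

lemma degree_replaceVertex_left (hn : ¬G.Adj s t) :
    (G.replaceVertex s t).degree s = G.degree s := by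
  simp only [← card_neighborFinset_eq_degree]
  congr 1
  ext v
  rw [mem_neighborFinset, mem_neighborFinset]
  by_cases hv : v = t <;> simp_all [replaceVertex]

lemma degree_replaceVertex_add_one (hwt : G.Adj w t) (hws : ¬G.Adj w s) :
    (G.replaceVertex s t).degree w + 1 = G.degree w := by
  simp only [← card_neighborFinset_eq_degree]
  rw [← card_erase_add_one (mem_neighborFinset _ _ _ |>.2 hwt)]
  congr 2
  ext v
  have hw : w ≠ t := G.ne_of_adj hwt
  rw [mem_neighborFinset, mem_erase, mem_neighborFinset]
  by_cases hv : v = t <;> simp_all [replaceVertex]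

lemma card_edgeFinset_replaceVertex_replaceVertex (hst : ¬G.Adj s t) (hsw : ¬G.Adj s w)
    (htw : G.Adj t w) :
    #((G.replaceVertex s t).replaceVertex s w).edgeFinset + G.degree t + G.degree w =
      #G.edgeFinset + 2 * G.degree s + 1 := by
  have hsw' : ¬(G.replaceVertex s t).Adj s w :=
    (G.adj_replaceVertex_iff_of_ne_left s (G.ne_of_adj htw).symm).not.2 hsw
  have := G.card_edgeFinset_replaceVertex_of_not_adj hst
  have := (G.replaceVertex s t).card_edgeFinset_replaceVertex_of_not_adj hsw'
  have := degree_replaceVertex_left (G := G) hst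
  have := degree_replaceVertex_add_one (s := s) htw.symm (mt G.adj_symm hsw)
  have := G.degree_le_card_edgeFinset (v := t)
  have := (G.replaceVertex s t).degree_le_card_edgeFinset (v := w)
  omega

theorem IsExtremal.degree_eq_of_not_adj (hp : IsZykovClosed p) (h : G.IsExtremal p)
    (hn : ¬G.Adj s t) : G.degree s = G.degree t := by
  have degree_le {a b : V} (hab : ¬G.Adj a b) : G.degree a ≤ G.degree b := by
    have := h.2 (hp h.1 hab)
    have := G.card_edgeFinset_replaceVertex_of_not_adj hab
    have := G.degree_le_card_edgeFinset (v := b)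
    omega
  exact (degree_le hn).antisymm (degree_le (mt G.adj_symm hn))

theorem IsExtremal.not_adj_trans (hp : IsZykovClosed p) (h : G.IsExtremal p)
    (hts : ¬G.Adj t s) (hsw : ¬G.Adj s w) : ¬G.Adj t w := by
  intro htw
  have hst : ¬G.Adj s t := mt G.adj_symm hts
  have hsw' : ¬(G.replaceVertex s t).Adj s w :=
    (G.adj_replaceVertex_iff_of_ne_left s (G.ne_of_adj htw).symm).not.2 hsw
  have := h.2 (hp (hp h.1 hst) hsw')
  have := card_edgeFinset_replaceVertex_replaceVertex hst hsw htw
  have := h.degree_eq_of_not_adj hp hst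
  have := h.degree_eq_of_not_adj hp hsw
  omega

theorem IsExtremal.isCompleteMultipartite (hp : IsZykovClosed p) (h : G.IsExtremal p) :
    G.IsCompleteMultipartite :=
  ⟨fun _ _ _ => h.not_adj_trans hp⟩

end Finite

end ReplaceVertex

lemma IsCompleteMultipartite.exists_adj_iff_ne_of_cliqueFree [Fintype V]
    {G : SimpleGraph V} {k : ℕ} (h : G.IsCompleteMultipartite) (hc : G.CliqueFree k) :
    ∃ f : V → Fin (k - 1), ∀ a b, G.Adj a b ↔ f a ≠ f b := by
  let : Fintype (Quotient h.setoid) := Fintype.ofFinite _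
  have hcard : Fintype.card (Quotient h.setoid) < k := lt_of_not_ge fun hle =>
    completeMultipartiteGraph.not_cliqueFree_of_le_card _ (fun c => ⟨c.out, h.setoid.refl _⟩) hle
      (hc.comap h.iso.symm.isContained)
  obtain ⟨e⟩ := Function.Embedding.nonempty_of_card_le
    (α := Quotient h.setoid) (β := Fin (k - 1)) (by rw [Fintype.card_fin]; omega)
  refine ⟨fun v => e (Quotient.mk h.setoid v), fun a b => ?_⟩
  rw [e.injective.ne_iff, Ne, Quotient.eq]
  exact not_not.symm

end SimpleGraph

open SimpleGraph

section Counting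

variable {r : ℕ} (𝓕 : Set (SimpleGraph (Fin r))) {V W : Type*}

def InducesFamily (G : SimpleGraph V) (u : Finset V) : Prop :=
  #u = r ∧ ∃ F ∈ 𝓕, Nonempty (F ≃g G.induce (u : Set V))

lemma famCount_eq_ncard [Fintype V] (G : SimpleGraph V) :
    famCount 𝓕 G = {u | InducesFamily 𝓕 G u}.ncard := rfl

variable {𝓕}

lemma inducesFamily_congr {G : SimpleGraph V} {H : SimpleGraph W} {u : Finset V} {v : Finset W}
    (e : G.induce (u : Set V) ≃g H.induce (v : Set W)) (huv : #u = #v) :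
    InducesFamily 𝓕 G u ↔ InducesFamily 𝓕 H v := by
  refine and_congr (by rw [huv]) (exists_congr fun F => and_congr_right fun _ => ?_)
  exact ⟨fun ⟨f⟩ => ⟨f.trans e⟩, fun ⟨f⟩ => ⟨f.trans e.symm⟩⟩

variable [DecidableEq V] {G : SimpleGraph V} {s t : V} {u : Finset V}

lemma inducesFamily_replaceVertex_iff_of_notMem_right (ht : t ∉ u) :
    InducesFamily 𝓕 (G.replaceVertex s t) u ↔ InducesFamily 𝓕 G u := by
  rw [InducesFamily, induce_replaceVertex_of_notMem ht, InducesFamily]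

lemma inducesFamily_replaceVertex_iff_of_notMem_left (hs : s ∉ u) :
    InducesFamily 𝓕 (G.replaceVertex s t) u ↔
      InducesFamily 𝓕 G (u.map (Equiv.swap s t).toEmbedding) :=
  inducesFamily_congr (induceReplaceVertexIso hs) (card_map _).symm

lemma InducesFamily.replaceVertex (hsym : Symmetrizable 𝓕) (h : InducesFamily 𝓕 G u)
    (hs : s ∈ u) (ht : t ∈ u) (hne : s ≠ t) (hn : ¬G.Adj s t) :
    InducesFamily 𝓕 (G.replaceVertex s t) u := by
  obtain ⟨hcard, F, hF, ⟨e⟩⟩ := h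
  have hne' : e.symm ⟨t, ht⟩ ≠ e.symm ⟨s, hs⟩ := by simpa using hne.symm
  have hn' : ¬F.Adj (e.symm ⟨t, ht⟩) (e.symm ⟨s, hs⟩) := by
    simpa [e.symm.map_adj_iff, G.adj_comm] using hn
  obtain ⟨F', hF', ⟨e'⟩⟩ := hsym F hF _ _ hne' hn'
  rw [zykov_eq_replaceVertex] at e'
  refine ⟨hcard, F', hF', ⟨e'.symm.trans ?_⟩⟩
  rw [induce_replaceVertex_of_mem hs ht]
  exact (e.symm.replaceVertex _ _).symm

theorem famCount_add_le_famCount_replaceVertex_add [Fintype V] (hsym : Symmetrizable 𝓕)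
    (hne : s ≠ t) (hn : ¬G.Adj s t) :
    famCount 𝓕 G + {u | InducesFamily 𝓕 G u ∧ s ∈ u ∧ t ∉ u}.ncard ≤
      famCount 𝓕 (G.replaceVertex s t) + {u | InducesFamily 𝓕 G u ∧ t ∈ u ∧ s ∉ u}.ncard := by
  classical
  have ncard_eq_sum (p : Finset V → Prop) [DecidablePred p] :
      {u | p u}.ncard = ∑ u, if p u then 1 else 0 := by
    rw [Set.ncard_eq_toFinset_card', Set.toFinset_ofPred, sum_boole, Nat.cast_id]
  -- after reindexing the second sum on the left by the swap `s ↔ t`, the inequality holds termwise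
  rw [famCount_eq_ncard, famCount_eq_ncard, ncard_eq_sum, ncard_eq_sum, ncard_eq_sum,
    ncard_eq_sum, ← (Equiv.swap s t).finsetCongr.sum_comp
      (fun u => if InducesFamily 𝓕 G u ∧ s ∈ u ∧ t ∉ u then 1 else 0),
    ← sum_add_distrib, ← sum_add_distrib]
  refine sum_le_sum fun u _ => ?_
  have hsτ : s ∈ u.map (Equiv.swap s t).toEmbedding ↔ t ∈ u := by simp [mem_map_equiv]
  have htτ : t ∈ u.map (Equiv.swap s t).toEmbedding ↔ s ∈ u := by simp [mem_map_equiv]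
  simp only [Equiv.finsetCongr_apply, hsτ, htτ]
  by_cases ht : t ∈ u
  · by_cases hs : s ∈ u
    · have := fun h : InducesFamily 𝓕 G u => h.replaceVertex hsym hs ht hne hn
      split_ifs <;> simp_all
    · have := inducesFamily_replaceVertex_iff_of_notMem_left (G := G) (𝓕 := 𝓕) (t := t) hs
      split_ifs <;> simp_all
  · have := inducesFamily_replaceVertex_iff_of_notMem_right (G := G) (𝓕 := 𝓕) (s := s) ht
    split_ifs <;> simp_all

end Counting

section Maximizer

variable {r k : ℕ} (𝓕 : Set (SimpleGraph (Fin r))) (k) {V : Type*} [Fintype V]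

def IsFamMaximizer (G : SimpleGraph V) : Prop :=
  G.CliqueFree k ∧ ∀ H : SimpleGraph V, H.CliqueFree k → famCount 𝓕 H ≤ famCount 𝓕 G

variable {𝓕 k}

lemma exists_isFamMaximizer (hk : 2 ≤ k) : ∃ G : SimpleGraph V, IsFamMaximizer 𝓕 k G := by
  obtain ⟨G, hG, hmax⟩ := Set.exists_max_image {H : SimpleGraph V | H.CliqueFree k}
    (famCount 𝓕) (Set.toFinite _) ⟨⊥, cliqueFree_bot hk⟩
  exact ⟨G, hG, hmax⟩

variable [DecidableEq V] {G : SimpleGraph V} {s t : V}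

theorem IsFamMaximizer.famCount_replaceVertex (hsym : Symmetrizable 𝓕)
    (hG : IsFamMaximizer 𝓕 k G) (hn : ¬G.Adj s t) :
    famCount 𝓕 (G.replaceVertex s t) = famCount 𝓕 G := by
  obtain rfl | hne := eq_or_ne s t
  · rw [replaceVertex_self]
  have := famCount_add_le_famCount_replaceVertex_add hsym hne hn
  have := famCount_add_le_famCount_replaceVertex_add hsym hne.symm (mt G.adj_symm hn)
  have := hG.2 _ (hG.1.replaceVertex s t)
  have := hG.2 _ (hG.1.replaceVertex t s)
  omega

lemma isZykovClosed_isFamMaximizer (hsym : Symmetrizable 𝓕) :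
    IsZykovClosed (IsFamMaximizer (V := V) 𝓕 k) :=
  fun _ _ _ hG hn => ⟨hG.1.replaceVertex _ _, hG.famCount_replaceVertex hsym hn ▸ hG.2⟩

end Maximizer

theorem stmt6_general {r k n : ℕ} (hk : 3 ≤ k)
    (𝓕 : Set (SimpleGraph (Fin r))) (hsym : Symmetrizable 𝓕) :
    ∃ G : SimpleGraph (Fin n),
      (∃ f : Fin n → Fin (k - 1), ∀ a b : Fin n, G.Adj a b ↔ f a ≠ f b) ∧
      G.CliqueFree k ∧
      ∀ G' : SimpleGraph (Fin n), G'.CliqueFree k → famCount 𝓕 G' ≤ famCount 𝓕 G := by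
  obtain ⟨G, _, hG⟩ := (exists_isExtremal_iff_exists (IsFamMaximizer 𝓕 k)).2
    (exists_isFamMaximizer (V := Fin n) (by omega))
  have hmult := hG.isCompleteMultipartite (isZykovClosed_isFamMaximizer hsym)
  exact ⟨G, hmult.exists_adj_iff_ne_of_cliqueFree hG.prop.1, hG.prop.1, hG.prop.2⟩

/-- For a symmetrizable family `𝓕` and `k ≥ 3`, the maximum of `P(𝓕,·)` over `K_k`-free
graphs on `n` vertices is attained by a complete multipartite graph with at most `k-1`
parts (hence `K_k`-free). -/
theorem stmt6 {r k n : ℕ} (hk : 3 ≤ k) (hn : 1 ≤ n)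
    (𝓕 : Set (SimpleGraph (Fin r))) (hsym : Symmetrizable 𝓕) :
    ∃ G : SimpleGraph (Fin n),
      (∃ f : Fin n → Fin (k - 1), ∀ a b : Fin n, G.Adj a b ↔ f a ≠ f b) ∧
      G.CliqueFree k ∧
      ∀ G' : SimpleGraph (Fin n), G'.CliqueFree k → famCount 𝓕 G' ≤ famCount 𝓕 G :=
  stmt6_general hk 𝓕 hsym
end

section
/- Let F = K_{a_1,…,a_r} be a complete multipartite graph with part sizes a_1 ≥ … ≥ a_r ≥ 1, r ≥ 2, that is strongly unbalanced, i.e., (a_i − a_j)² > a_i + a_j for all 1 ≤ i < j ≤ r. Let m ≥ r and suppose x ∈ Δ^{m−1} maximizes P_{F,m} over Δ^{m−1}. Then the positive coordinates of x are pairwise distinct: for all i ≠ j with x_i > 0 and x_j > 0, one has x_i ≠ x_j. -/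
/-- The density polynomial `P_{F,m}` of the complete multipartite graph with part sizes
`a_1, …, a_r`, in `m` variables:
`(s!/(a_1!⋯a_r!·π(F))) · Σ_σ ∏_i x_{σ(i)}^{a_i}`, summed over injections `σ : [r] → [m]`,
where `π(F) = ∏_n c(n)!` and `c(n)` is the number of parts of size `n`. -/
noncomputable def PF {r : ℕ} (a : Fin r → ℕ) (m : ℕ) (x : Fin m → ℝ) : ℝ :=
  (((∑ i, a i).factorial : ℝ) /
      (((∏ i, (a i).factorial) *
        ∏ n ∈ Finset.range ((∑ i, a i) + 1),
          ((Finset.univ.filter fun i => a i = n).card.factorial) : ℕ) : ℝ)) *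
    ∑ σ : Fin r ↪ Fin m, ∏ i, x (σ i) ^ a i

/-!
Suppose a maximizer `x` had `x i = x j = c > 0`. Replace these two coordinates by
`c (1 + u), c (1 - u)` or by `c (1 - u), c (1 + u)`. For an injection `σ` sending parts of sizes
`p` and `q` to `i` and `j` (with `p` or `q` zero if `i` or `j` is missed), the two perturbed
monomials add up to `perturbFactor u p q` times the monomial at `x`. This factor is `≥ 2` when
`p` or `q` vanishes, by convexity, and for two parts of a strongly unbalanced graph it equals
`(1 - u²) ^ q ((1 + u) ^ d + (1 - u) ^ d) = 2 + (d (d - 1) - 2 q) u² + O(u⁴)` with `d = p - q`,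
which exceeds `2` for small `u` because `d² > p + q`. A maximizer has at least `r` positive
coordinates, so some injection through `i` and `j` carries a positive monomial, and the two
perturbed points together beat `2 P(x)`, contradicting maximality.
-/

open Finset Function

/-- The factor by which the two swapped perturbations `c (1 ± u), c (1 ∓ u)` of two equal
coordinates `c` multiply a monomial with exponents `p, q` there, summed over both. -/
def perturbFactor (u : ℝ) (p q : ℕ) : ℝ :=
  (1 + u) ^ p * (1 - u) ^ q + (1 - u) ^ p * (1 + u) ^ q

theorem perturbFactor_comm (u : ℝ) (p q : ℕ) : perturbFactor u p q = perturbFactor u q p := by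
  unfold perturbFactor; ring

theorem natCast_mul_sub_one_nonneg (d : ℕ) : 0 ≤ (d : ℝ) * (d - 1) := by
  rcases d with _ | d
  · simp
  · push_cast
    rw [add_sub_cancel_right]
    positivity

theorem two_add_mul_sq_le_perturbFactor_zero (u : ℝ) (d : ℕ) :
    2 + d * (d - 1) * u ^ 2 ≤ perturbFactor u d 0 := by
  -- joint induction with the odd part `(1 + u) ^ d - (1 - u) ^ d`
  suffices h : 2 + d * (d - 1) * u ^ 2 ≤ (1 + u) ^ d + (1 - u) ^ d ∧
      2 * d * u ^ 2 ≤ u * ((1 + u) ^ d - (1 - u) ^ d) by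
    simpa [perturbFactor] using h.1
  induction d with
  | zero => norm_num
  | succ d ih =>
    obtain ⟨heven, hodd⟩ := ih
    have hd := mul_nonneg (natCast_mul_sub_one_nonneg d) (sq_nonneg u)
    have hstep₁ : (1 + u) ^ (d + 1) + (1 - u) ^ (d + 1) =
        (1 + u) ^ d + (1 - u) ^ d + u * ((1 + u) ^ d - (1 - u) ^ d) := by ring
    have hstep₂ : u * ((1 + u) ^ (d + 1) - (1 - u) ^ (d + 1)) =
        u * ((1 + u) ^ d - (1 - u) ^ d) + u ^ 2 * ((1 + u) ^ d + (1 - u) ^ d) := by ring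
    rw [hstep₁, hstep₂]
    push_cast
    constructor
    · linarith
    · nlinarith [mul_le_mul_of_nonneg_left (show 2 ≤ (1 + u) ^ d + (1 - u) ^ d by linarith)
        (sq_nonneg u)]

theorem two_le_perturbFactor_zero (u : ℝ) (p : ℕ) : 2 ≤ perturbFactor u p 0 :=
  (le_add_of_nonneg_right (mul_nonneg (natCast_mul_sub_one_nonneg p) (sq_nonneg u))).trans
    (two_add_mul_sq_le_perturbFactor_zero u p)

theorem perturbFactor_add_left (u : ℝ) (q d : ℕ) :
    perturbFactor u (q + d) q = (1 - u ^ 2) ^ q * perturbFactor u d 0 := by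
  simp only [perturbFactor, pow_add, show 1 - u ^ 2 = (1 + u) * (1 - u) by ring, mul_pow]
  ring

theorem two_lt_perturbFactor {p q : ℕ} (hpq : (p + q : ℝ) < ((p : ℝ) - q) ^ 2) {u : ℝ}
    (hu : 0 < u) (hu_small : ((p : ℝ) + q) ^ 2 * u < 1) : 2 < perturbFactor u p q := by
  wlog hqp : q ≤ p generalizing p q
  · rw [perturbFactor_comm]
    exact this (by linarith) (by linarith) (by omega)
  obtain ⟨d, rfl⟩ := Nat.exists_eq_add_of_le hqp
  rw [perturbFactor_add_left]
  push_cast at hpq hu_small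
  have hgap : 2 * (q : ℝ) + 1 ≤ d * (d - 1) := by
    have : 2 * q + d + 1 ≤ d ^ 2 := by
      exact_mod_cast (show ((2 * q + d : ℕ) : ℝ) < (d ^ 2 : ℕ) by push_cast; linarith)
    have : (2 * q + d + 1 : ℝ) ≤ d ^ 2 := by exact_mod_cast this
    linarith
  have hN : (1 : ℝ) ≤ 2 * q + d := by nlinarith
  have hNu : (2 * q + d : ℝ) ^ 2 * u < 1 := by linarith
  have hu₂ : u ^ 2 ≤ 1 := by
    have : u < 1 := (le_mul_of_one_le_left hu.le (one_le_pow₀ hN)).trans_lt hNu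
    nlinarith
  have hbernoulli : 1 - q * u ^ 2 ≤ (1 - u ^ 2) ^ q := by
    simpa [sub_eq_add_neg] using one_add_mul_le_pow (a := -u ^ 2) (by linarith) q
  have hsmall : q * (d * (d - 1)) * u ^ 2 < 1 := by
    have hq : (q : ℝ) ≤ 2 * q + d := by linarith
    have hd : (d : ℝ) * (d - 1) ≤ (2 * q + d) ^ 2 := by nlinarith
    have hqd : q * (d * (d - 1)) ≤ ((2 * q + d : ℝ) ^ 2) ^ 2 := by nlinarith
    have hN4 : ((2 * q + d : ℝ) ^ 2 * u) ^ 2 < 1 := pow_lt_one₀ (by positivity) hNu two_ne_zero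
    nlinarith [mul_pos hu hu]
  -- the middle term is `2 + u ^ 2 * (d (d - 1) - 2 q - q d (d - 1) u ^ 2)`
  calc (2 : ℝ) < (1 - q * u ^ 2) * (2 + d * (d - 1) * u ^ 2) := by nlinarith [mul_pos hu hu]
    _ ≤ _ := mul_le_mul hbernoulli (two_add_mul_sq_le_perturbFactor_zero u d)
        (by nlinarith) (pow_nonneg (by linarith) q)

section

variable {ι α : Type*}

noncomputable def embMonomialSum [Fintype ι] [Fintype α] (a : ι → ℕ) (x : α → ℝ) : ℝ :=
  ∑ σ : ι ↪ α, ∏ k, x (σ k) ^ a k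

theorem Function.Embedding.prod_pow_extend [Fintype ι] [Fintype α] {M : Type*} [CommMonoid M]
    (σ : ι ↪ α) (a : ι → ℕ) (f : α → M) : ∏ v, f v ^ extend σ a 0 v = ∏ k, f (σ k) ^ a k := by
  classical
  rw [← prod_subset (subset_univ (univ.map σ)), prod_map]
  · exact prod_congr rfl fun k _ => by rw [σ.injective.extend_apply]
  · intro v _ hv
    rw [extend_apply' _ _ _ (by simpa using hv), Pi.zero_apply, pow_zero]

theorem prod_pow_update_update [Fintype α] [DecidableEq α] {M : Type*} [CommMonoid M]
    (x : α → M) (n : α → ℕ) {i j : α} (hij : i ≠ j) (b c : M) :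
    ∏ v, update (update x i b) j c v ^ n v =
      b ^ n i * c ^ n j * ∏ v ∈ (univ.erase i).erase j, x v ^ n v := by
  rw [← mul_prod_erase univ _ (mem_univ i),
    ← mul_prod_erase _ _ (mem_erase.2 ⟨hij.symm, mem_univ j⟩), ← mul_assoc]
  congr 1
  · simp [update_of_ne hij]
  · refine prod_congr rfl fun v hv => ?_
    obtain ⟨hvj, hvi⟩ := by simpa using hv
    simp [update_of_ne hvj, update_of_ne hvi]

theorem sum_update_update [Fintype α] [DecidableEq α] (x : α → ℝ) {i j : α} (hij : i ≠ j)
    (b c : ℝ) :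
    ∑ v, update (update x i b) j c v = ∑ v, x v + (b - x i) + (c - x j) := by
  have h : ∀ b c : ℝ,
      ∑ v, update (update x i b) j c v = c + (b + ∑ v ∈ (univ \ {j}) \ {i}, x v) :=
    fun b c => by rw [sum_update_of_mem (mem_univ j), sum_update_of_mem (by simpa using hij)]
  have hx := h (x i) (x j)
  simp only [update_eq_self] at hx
  rw [h, hx]
  ring

theorem update_update_mem_stdSimplex [Fintype α] [DecidableEq α] {x : α → ℝ}
    (hx : x ∈ stdSimplex ℝ α) {i j : α} (hij : i ≠ j) {b c : ℝ} (hb : 0 ≤ b) (hc : 0 ≤ c)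
    (hbc : b + c = x i + x j) :
    update (update x i b) j c ∈ stdSimplex ℝ α := by
  refine ⟨fun v => ?_, ?_⟩
  · simp only [update_apply]
    split_ifs
    exacts [hc, hb, hx.1 v]
  · rw [sum_update_update x hij, hx.2]
    linarith

theorem prod_perturb_add_prod_perturb [Fintype ι] [Fintype α] [DecidableEq α] (a : ι → ℕ)
    (σ : ι ↪ α) {x : α → ℝ} {i j : α} (hij : i ≠ j) {c : ℝ} (hxi : x i = c) (hxj : x j = c)
    (u : ℝ) :
    ∏ k, update (update x i (c * (1 + u))) j (c * (1 - u)) (σ k) ^ a k +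
        ∏ k, update (update x i (c * (1 - u))) j (c * (1 + u)) (σ k) ^ a k =
      perturbFactor u (extend σ a 0 i) (extend σ a 0 j) * ∏ k, x (σ k) ^ a k := by
  have hx := prod_pow_update_update x (extend σ a 0) hij (x i) (x j)
  simp only [update_eq_self] at hx
  rw [← σ.prod_pow_extend a x, ← σ.prod_pow_extend a, ← σ.prod_pow_extend a, hx,
    prod_pow_update_update _ _ hij, prod_pow_update_update _ _ hij, hxi, hxj, perturbFactor]
  simp only [mul_pow]
  ring

theorem two_lt_perturbFactor_extend {a : ι → ℕ} {u : ℝ}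
    (hpair : ∀ k l, k ≠ l → 2 < perturbFactor u (a k) (a l)) {σ : ι ↪ α} {i j : α} (hij : i ≠ j)
    (hi : i ∈ Set.range σ) (hj : j ∈ Set.range σ) :
    2 < perturbFactor u (extend σ a 0 i) (extend σ a 0 j) := by
  obtain ⟨k, rfl⟩ := hi
  obtain ⟨l, rfl⟩ := hj
  rw [σ.injective.extend_apply, σ.injective.extend_apply]
  exact hpair k l (ne_of_apply_ne σ hij)

theorem two_le_perturbFactor_extend {a : ι → ℕ} {u : ℝ}
    (hpair : ∀ k l, k ≠ l → 2 < perturbFactor u (a k) (a l)) (σ : ι ↪ α) {i j : α} (hij : i ≠ j) :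
    2 ≤ perturbFactor u (extend σ a 0 i) (extend σ a 0 j) := by
  by_cases hi : ∃ k, σ k = i
  · by_cases hj : ∃ l, σ l = j
    · exact (two_lt_perturbFactor_extend hpair hij hi hj).le
    · rw [extend_apply' _ _ _ hj]
      exact two_le_perturbFactor_zero u _
  · rw [extend_apply' _ _ _ hi, perturbFactor_comm]
    exact two_le_perturbFactor_zero u _

theorem two_mul_embMonomialSum_lt [Fintype ι] [Fintype α] [DecidableEq α] {a : ι → ℕ}
    {x : α → ℝ} (hx : ∀ v, 0 ≤ x v) {i j : α} (hij : i ≠ j) {c : ℝ} (hxi : x i = c)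
    (hxj : x j = c) {u : ℝ}
    (hpair : ∀ k l, k ≠ l → 2 < perturbFactor u (a k) (a l)) {σ₀ : ι ↪ α}
    (hi : i ∈ Set.range σ₀) (hj : j ∈ Set.range σ₀) (hpos : ∀ k, 0 < x (σ₀ k)) :
    2 * embMonomialSum a x <
      embMonomialSum a (update (update x i (c * (1 + u))) j (c * (1 - u))) +
        embMonomialSum a (update (update x i (c * (1 - u))) j (c * (1 + u))) := by
  simp only [embMonomialSum, ← sum_add_distrib, prod_perturb_add_prod_perturb a _ hij hxi hxj,
    mul_sum]
  refine sum_lt_sum (fun σ _ => ?_) ⟨σ₀, mem_univ _, ?_⟩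
  · exact mul_le_mul_of_nonneg_right (two_le_perturbFactor_extend hpair σ hij)
      (prod_nonneg fun k _ => pow_nonneg (hx _) _)
  · exact mul_lt_mul_of_pos_right (two_lt_perturbFactor_extend hpair hij hi hj)
      (prod_pos fun k _ => pow_pos (hpos k) _)

theorem embMonomialSum_pos_of_isMaxOn [Fintype ι] [Fintype α] [Nonempty α] [Nonempty (ι ↪ α)]
    (a : ι → ℕ) {x : α → ℝ} (hmax : IsMaxOn (embMonomialSum a) (stdSimplex ℝ α) x) :
    0 < embMonomialSum a x := by
  have hcard : (0 : ℝ) < Fintype.card α := by exact_mod_cast Fintype.card_pos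
  refine lt_of_lt_of_le ?_
    (isMaxOn_iff.1 hmax (fun _ => (Fintype.card α : ℝ)⁻¹) ⟨fun _ => by positivity, ?_⟩)
  · exact sum_pos (fun σ _ => prod_pos fun k _ => by positivity) univ_nonempty
  · simp [hcard.ne']

theorem exists_embedding_forall_ne_zero [Fintype ι] [Fintype α] {a : ι → ℕ} (ha : ∀ k, a k ≠ 0)
    {x : α → ℝ} (hx : embMonomialSum a x ≠ 0) : ∃ σ : ι ↪ α, ∀ k, x (σ k) ≠ 0 := by
  obtain ⟨σ, -, hσ⟩ := exists_ne_zero_of_sum_ne_zero hx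
  exact ⟨σ, fun k => (pow_ne_zero_iff (ha k)).1 ((prod_ne_zero_iff.1 hσ) k (mem_univ k))⟩

theorem exists_embedding_forall_mem_of_subset [Fintype ι] {s t : Finset α} (σ : ι ↪ α)
    (hσ : ∀ k, σ k ∈ t) (hst : s ⊆ t) (hs : s.card ≤ Fintype.card ι) :
    ∃ τ : ι ↪ α, (∀ k, τ k ∈ t) ∧ ∀ v ∈ s, v ∈ Set.range τ := by
  have hι : Fintype.card ι ≤ t.card := by
    have := card_le_card_of_injOn (s := univ) σ (fun k _ => hσ k) σ.injective.injOn
    rwa [card_univ] at this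
  obtain ⟨B, hsB, hBt, hB⟩ := exists_subsuperset_card_eq hst hs hι
  let e : ι ≃ B := Fintype.equivOfCardEq (by simp [hB])
  exact ⟨e.toEmbedding.trans (Embedding.subtype _), fun k => hBt (e k).2,
    fun v hv => ⟨e.symm ⟨v, hsB hv⟩, by simp⟩⟩

end

theorem PF_le_PF_iff {r m : ℕ} (a : Fin r → ℕ) (x y : Fin m → ℝ) :
    PF a m y ≤ PF a m x ↔ embMonomialSum a y ≤ embMonomialSum a x :=
  mul_le_mul_iff_of_pos_left (by positivity)

-- a single `u` small enough for `two_lt_perturbFactor` at every pair of parts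
theorem two_lt_perturbFactor_of_stronglyUnbalanced {ι : Type*} [Fintype ι] [LinearOrder ι]
    {a : ι → ℕ} (hsu : ∀ i j : ι, i < j → ((a i : ℝ) + a j) < ((a i : ℝ) - a j) ^ 2) {k l : ι}
    (hkl : k ≠ l) : 2 < perturbFactor (((∑ i, a i : ℕ) + 1 : ℝ) ^ 2)⁻¹ (a k) (a l) := by
  have hkl' : ((a k : ℝ) + a l) < ((a k : ℝ) - a l) ^ 2 := by
    rcases hkl.lt_or_gt with h | h
    · exact hsu k l h
    · linarith [hsu l k h, show ((a l : ℝ) - a k) ^ 2 = ((a k : ℝ) - a l) ^ 2 by ring]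
  have hsum : a k + a l ≤ ∑ i, a i := by
    simpa [sum_pair hkl] using sum_le_sum_of_subset (f := a) (subset_univ {k, l})
  have hsum' : (a k + a l : ℝ) ≤ (∑ i, a i : ℕ) := by exact_mod_cast hsum
  refine two_lt_perturbFactor hkl' (by positivity) ?_
  rw [← div_eq_mul_inv, div_lt_one (by positivity)]
  have : (0 : ℝ) ≤ a k + a l := by positivity
  nlinarith

theorem stmt15_general {r m : ℕ} (hr : 2 ≤ r) (hm : r ≤ m)
    (a : Fin r → ℕ) (ha : ∀ i, 1 ≤ a i)
    (hsu : ∀ i j : Fin r, i < j → ((a i : ℝ) + (a j : ℝ)) < ((a i : ℝ) - (a j : ℝ)) ^ 2)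
    (x : Fin m → ℝ) (hx : x ∈ stdSimplex ℝ (Fin m))
    (hmax : ∀ y ∈ stdSimplex ℝ (Fin m), PF a m y ≤ PF a m x) :
    ∀ i j : Fin m, i ≠ j → 0 < x i → 0 < x j → x i ≠ x j := by
  intro i j hij hxi hxj hxij
  replace hmax : IsMaxOn (embMonomialSum a) (stdSimplex ℝ (Fin m)) x :=
    fun y hy => (PF_le_PF_iff a x y).1 (hmax y hy)
  have : Nonempty (Fin r ↪ Fin m) := ⟨Fin.castLEEmb hm⟩
  have : Nonempty (Fin m) := ⟨i⟩
  obtain ⟨σ, hσ⟩ := exists_embedding_forall_ne_zero (fun k => Nat.one_le_iff_ne_zero.1 (ha k))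
    (embMonomialSum_pos_of_isMaxOn a hmax).ne'
  obtain ⟨σ₀, hσ₀, hijσ₀⟩ := exists_embedding_forall_mem_of_subset (s := {i, j})
    (t := univ.filter (0 < x ·)) σ (fun k => by simpa using (hx.1 _).lt_of_ne' (hσ k))
    (by simp [insert_subset_iff, hxi, hxj]) (by simpa using card_le_two.trans hr)
  set u : ℝ := (((∑ k, a k : ℕ) + 1 : ℝ) ^ 2)⁻¹
  have hu : u ≤ 1 :=
    inv_le_one_of_one_le₀ (one_le_pow₀ (le_add_of_nonneg_left (Nat.cast_nonneg _)))
  have hlt := two_mul_embMonomialSum_lt (u := u) hx.1 hij rfl hxij.symm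
    (fun k l hkl => two_lt_perturbFactor_of_stronglyUnbalanced hsu hkl)
    (hijσ₀ i (by simp)) (hijσ₀ j (by simp)) (fun k => by simpa using hσ₀ k)
  have hp := isMaxOn_iff.1 hmax _ (update_update_mem_stdSimplex (b := x i * (1 + u))
    (c := x i * (1 - u)) hx hij (by positivity) (mul_nonneg hxi.le (by linarith))
    (by rw [← hxij]; ring))
  have hn := isMaxOn_iff.1 hmax _ (update_update_mem_stdSimplex (b := x i * (1 - u))
    (c := x i * (1 + u)) hx hij (mul_nonneg hxi.le (by linarith)) (by positivity)
    (by rw [← hxij]; ring))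
  linarith

/-- For a strongly unbalanced complete multipartite graph `F = K_{a_1,…,a_r}`
(`(a_i - a_j)² > a_i + a_j` for all `i < j`), any maximizer of `P_{F,m}` over the
standard simplex has pairwise distinct positive coordinates. -/
theorem stmt15 {r m : ℕ} (hr : 2 ≤ r) (hm : r ≤ m)
    (a : Fin r → ℕ) (ha : ∀ i, 1 ≤ a i)
    (hsorted : ∀ i j : Fin r, i ≤ j → a j ≤ a i)
    (hsu : ∀ i j : Fin r, i < j → ((a i : ℝ) + (a j : ℝ)) < ((a i : ℝ) - (a j : ℝ)) ^ 2)
    (x : Fin m → ℝ) (hx : x ∈ stdSimplex ℝ (Fin m))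
    (hmax : ∀ y ∈ stdSimplex ℝ (Fin m), PF a m y ≤ PF a m x) :
    ∀ i j : Fin m, i ≠ j → 0 < x i → 0 < x j → x i ≠ x j :=
  stmt15_general hr hm a ha hsu x hx hmax
end

section
/- Let F = T(s,r) be the Turán graph with 2 ≤ r < s ≤ 3r+1, and let m ≥ r. Suppose x ∈ Δ^{m−1} maximizes P_{F,m} over Δ^{m−1}, and let ℓ be the number of nonzero coordinates of x. Then every nonzero coordinate of x equals 1/ℓ. -/
/-!
Fix two coordinates `i ≠ j` of a maximizer `x` carrying positive mass and redistribute their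
total `S` as `(u, v)`, `u + v = S`. Every embedding contributes a monomial `R u ^ α v ^ β` with
`R ≥ 0` and `α, β ∈ {0, p, p + 1}`, and the sum is symmetric under `u ↔ v`, so on this segment the
density is `f (S, 0) + w h(w)` in `w = u v` with `h` nondecreasing (`SlopeMonotone`). As `w` is
largest at the midpoint, a point doing as well as the midpoint and the endpoint `(S, 0)` is the
midpoint, or `h(w) = 0` and moving all of `S` onto `i` gives another maximizer.

Now induct on the size of the support. If `x i ≠ x j`, the merged maximizer is constant on its
support by induction, and this support has at least `r ≥ 2` points because the density vanishes
at points with fewer than `r` nonzero coordinates. So some third coordinate has `x k = x i + x j`;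
merging `k` into `i` then gives `x j = x i + x k`, which is absurd.
-/

open Finset

def SlopeMonotone (S : ℝ) (f : ℝ → ℝ → ℝ) : Prop :=
  ∃ h : ℝ → ℝ, MonotoneOn h (Set.Ici 0) ∧
    ∀ u v, 0 ≤ u → 0 ≤ v → u + v = S → f u v = f S 0 + u * v * h (u * v)

namespace SlopeMonotone

variable {S : ℝ} {f g : ℝ → ℝ → ℝ}

theorem const (c : ℝ) : SlopeMonotone S fun _ _ => c :=
  ⟨fun _ => 0, monotoneOn_const, fun _ _ _ _ _ => by ring⟩

theorem add (hf : SlopeMonotone S f) (hg : SlopeMonotone S g) : SlopeMonotone S (f + g) := by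
  obtain ⟨h, hmono, hh⟩ := hf
  obtain ⟨k, kmono, hk⟩ := hg
  refine ⟨h + k, hmono.add kmono, fun u v hu hv huv => ?_⟩
  simp only [Pi.add_apply, hh u v hu hv huv, hk u v hu hv huv]
  ring

theorem const_mul (hf : SlopeMonotone S f) {c : ℝ} (hc : 0 ≤ c) :
    SlopeMonotone S fun u v => c * f u v := by
  obtain ⟨h, hmono, hh⟩ := hf
  refine ⟨fun w => c * h w, fun a ha b hb hab => mul_le_mul_of_nonneg_left (hmono ha hb hab) hc,
    fun u v hu hv huv => ?_⟩
  change c * f u v = c * f S 0 + u * v * (c * h (u * v))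
  rw [hh u v hu hv huv]
  ring

theorem congr (hf : SlopeMonotone S f) (hfg : ∀ u v, f u v = g u v) : SlopeMonotone S g :=
  funext₂ hfg ▸ hf

theorem sum {κ : Type*} (s : Finset κ) {F : κ → ℝ → ℝ → ℝ}
    (hF : ∀ σ ∈ s, SlopeMonotone S (F σ)) : SlopeMonotone S fun u v => ∑ σ ∈ s, F σ u v :=
  congr (Finset.sum_induction F (SlopeMonotone S) (fun _ _ => add) (const 0) hF) fun u v => by
    simp only [Finset.sum_apply]

theorem eq_or_eq_endpoint {u v : ℝ} (hf : SlopeMonotone (u + v) f) (hu : 0 < u) (hv : 0 < v)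
    (hend : f (u + v) 0 ≤ f u v) (hmid : f ((u + v) / 2) ((u + v) / 2) ≤ f u v) :
    u = v ∨ f (u + v) 0 = f u v := by
  obtain ⟨h, hmono, hh⟩ := hf
  rcases eq_or_ne u v with huv | huv
  · exact Or.inl huv
  right
  have hfw := hh u v hu.le hv.le rfl
  have hfW := hh ((u + v) / 2) ((u + v) / 2) (by positivity) (by positivity) (by ring)
  set w := u * v
  set W := (u + v) / 2 * ((u + v) / 2)
  have hw : 0 < w := mul_pos hu hv
  have hwW : w < W := by
    have : 0 < (u - v) ^ 2 := by positivity [sub_ne_zero.mpr huv]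
    simp only [w, W]; nlinarith
  have hmon : h w ≤ h W := hmono (Set.mem_Ici.2 hw.le) (Set.mem_Ici.2 (hw.trans hwW).le) hwW.le
  have hhw : 0 ≤ h w := nonneg_of_mul_nonneg_right (by linarith) hw
  have : h w = 0 := by nlinarith [mul_le_mul_of_nonneg_left hmon (hw.trans hwW).le]
  rw [hfw, this, mul_zero, add_zero]

end SlopeMonotone

-- In terms of `S = u + v` and `w = u v`, the coefficients of `w ^ k`, `k ≥ 2`, in `u ^ n + v ^ n`
-- are nonnegative only up to `n = 5`: `u ^ 6 + v ^ 6` contains `-2 w ^ 3`.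
theorem slopeMonotone_pow_add_pow {S : ℝ} (hS : 0 ≤ S) {n : ℕ} (hn : n ≤ 5) :
    SlopeMonotone S fun u v => u ^ n + v ^ n := by
  interval_cases n
  · exact ⟨fun _ => 0, monotoneOn_const, fun u v _ _ _ => by ring⟩
  · exact ⟨fun _ => 0, monotoneOn_const, fun u v _ _ huv => by subst huv; ring⟩
  · exact ⟨fun _ => -2, monotoneOn_const, fun u v _ _ huv => by subst huv; ring⟩
  · exact ⟨fun _ => -3 * S, monotoneOn_const, fun u v _ _ huv => by subst huv; ring⟩
  · refine ⟨fun w => 2 * w - 4 * S ^ 2, fun a _ b _ hab => by linarith,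
      fun u v _ _ huv => by subst huv; ring⟩
  · refine ⟨fun w => 5 * S * w - 5 * S ^ 3, fun a _ b _ hab => by nlinarith,
      fun u v _ _ huv => by subst huv; ring⟩

theorem slopeMonotone_pow_mul_pow_add {S : ℝ} (hS : 0 ≤ S) (k : ℕ) {d : ℕ} (hd : d ≤ 1) :
    SlopeMonotone S fun u v => u ^ (k + 1) * v ^ (k + 1 + d) + u ^ (k + 1 + d) * v ^ (k + 1) := by
  have hmono : ∀ c : ℝ, 0 ≤ c → MonotoneOn (fun w : ℝ => c * w ^ k) (Set.Ici 0) :=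
    fun c hc a ha b _ hab => by
      have : 0 ≤ a := ha
      dsimp only; gcongr
  interval_cases d
  · exact ⟨fun w => 2 * w ^ k, hmono 2 zero_le_two, fun u v _ _ _ => by ring⟩
  · exact ⟨fun w => S * w ^ k, hmono S hS, fun u v _ _ huv => by subst huv; ring⟩

theorem slopeMonotone_pow_mul_pow_add_pow_mul_pow {S : ℝ} (hS : 0 ≤ S) {p α β : ℕ}
    (hp : 1 ≤ p) (hp4 : p ≤ 4) (hα : α = 0 ∨ α = p ∨ α = p + 1)
    (hβ : β = 0 ∨ β = p ∨ β = p + 1) :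
    SlopeMonotone S fun u v => u ^ α * v ^ β + u ^ β * v ^ α := by
  obtain ⟨k, rfl⟩ : ∃ k, p = k + 1 := ⟨p - 1, by omega⟩
  rcases hα with rfl | rfl | rfl
  · exact (slopeMonotone_pow_add_pow hS (n := β) (by omega)).congr fun u v => by ring
  all_goals rcases hβ with rfl | rfl | rfl
  · exact (slopeMonotone_pow_add_pow hS (n := k + 1) (by omega)).congr fun u v => by ring
  · exact slopeMonotone_pow_mul_pow_add hS k (d := 0) zero_le_one
  · exact slopeMonotone_pow_mul_pow_add hS k le_rfl
  · exact (slopeMonotone_pow_add_pow hS (n := k + 1 + 1) (by omega)).congr fun u v => by ring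
  · exact (slopeMonotone_pow_mul_pow_add hS k le_rfl).congr fun u v => by ring
  · exact slopeMonotone_pow_mul_pow_add hS (k + 1) (d := 0) zero_le_one

section Embeddings

variable {ι : Type*} {r : ℕ}

section DecidableEq

variable [DecidableEq ι]

def pairUpdate {β : Type*} (x : ι → β) (i j : ι) (u v : β) : ι → β :=
  Function.update (Function.update x i u) j v

section

variable {β : Type*} (x : ι → β) {i j : ι} (u v : β)

@[simp] theorem pairUpdate_apply_left (hij : i ≠ j) : pairUpdate x i j u v i = u := by
  simp [pairUpdate, hij]

@[simp] theorem pairUpdate_apply_right : pairUpdate x i j u v j = v := by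
  simp [pairUpdate]

theorem pairUpdate_apply_of_ne {c : ι} (hci : c ≠ i) (hcj : c ≠ j) :
    pairUpdate x i j u v c = x c := by
  simp [pairUpdate, hci, hcj]

theorem pairUpdate_apply_swap (hij : i ≠ j) (c : ι) :
    pairUpdate x i j u v (Equiv.swap i j c) = pairUpdate x i j v u c := by
  rcases eq_or_ne c i with rfl | hci
  · simp [hij]
  rcases eq_or_ne c j with rfl | hcj
  · simp [hij]
  · rw [Equiv.swap_apply_of_ne_of_ne hci hcj, pairUpdate_apply_of_ne x u v hci hcj,
      pairUpdate_apply_of_ne x v u hci hcj]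

theorem pairUpdate_self : pairUpdate x i j (x i) (x j) = x := by
  simp [pairUpdate]

end

theorem pairUpdate_nonneg {x : ι → ℝ} (hx : 0 ≤ x) {i j : ι} {u v : ℝ} (hu : 0 ≤ u)
    (hv : 0 ≤ v) : 0 ≤ pairUpdate x i j u v := by
  intro c
  simp only [pairUpdate, Function.update_apply]
  split_ifs
  exacts [hv, hu, hx c]

theorem pairUpdate_eq_add_single (x : ι → ℝ) {i j : ι} (hij : i ≠ j) (u v : ℝ) :
    pairUpdate x i j u v = x + Pi.single i (u - x i) + Pi.single j (v - x j) := by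
  funext c
  rcases eq_or_ne c i with rfl | hci
  · simp [hij]
  rcases eq_or_ne c j with rfl | hcj
  · simp [hij.symm]
  · simp [pairUpdate_apply_of_ne x u v hci hcj, hci, hcj]

theorem support_pairUpdate_zero {x : ι → ℝ} {i j : ι} (hi : x i ≠ 0) {w : ℝ} (hw : w ≠ 0) :
    Function.support (pairUpdate x i j w 0) = Function.support x \ {j} := by
  rw [pairUpdate, Function.support_update_zero, Function.support_update_of_ne_zero _ _ hw,
    Set.insert_eq_of_mem (Function.mem_support.2 hi)]

def degAt (a : Fin r → ℕ) (σ : Fin r ↪ ι) (i : ι) : ℕ :=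
  ∑ k with σ k = i, a k

theorem degAt_eq_zero_or_exists (a : Fin r → ℕ) (σ : Fin r ↪ ι) (i : ι) :
    degAt a σ i = 0 ∨ ∃ k, degAt a σ i = a k := by
  by_cases h : ∃ k, σ k = i
  · obtain ⟨k, rfl⟩ := h
    refine Or.inr ⟨k, ?_⟩
    rw [degAt, Finset.sum_eq_single_of_mem k (by simp)]
    intro l hl hlk
    exact absurd (σ.injective (Finset.mem_filter.1 hl).2) hlk
  · refine Or.inl (Finset.sum_eq_zero fun k hk => ?_)
    exact absurd ⟨k, (Finset.mem_filter.1 hk).2⟩ h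

theorem prod_pairUpdate (a : Fin r → ℕ) (x : ι → ℝ) {i j : ι} (hij : i ≠ j) (u v : ℝ)
    (σ : Fin r ↪ ι) :
    ∏ k, pairUpdate x i j u v (σ k) ^ a k =
      u ^ degAt a σ i * v ^ degAt a σ j * ∏ k, pairUpdate x i j 1 1 (σ k) ^ a k := by
  have hfactor : ∀ c n, pairUpdate x i j u v c ^ n = (if c = i then u ^ n else 1) *
      (if c = j then v ^ n else 1) * pairUpdate x i j 1 1 c ^ n := by
    intro c n
    rcases eq_or_ne c i with rfl | hci
    · simp [hij]
    rcases eq_or_ne c j with rfl | hcj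
    · simp [hij.symm]
    · simp [pairUpdate_apply_of_ne x _ _ hci hcj, hci, hcj]
  simp only [hfactor, Finset.prod_mul_distrib, ← Finset.prod_filter, Finset.prod_pow_eq_pow_sum,
    degAt]

end DecidableEq

variable [Fintype ι]

noncomputable def embSum (a : Fin r → ℕ) (x : ι → ℝ) : ℝ :=
  ∑ σ : Fin r ↪ ι, ∏ k, x (σ k) ^ a k

theorem exists_pos_PF_eq_mul_embSum (a : Fin r → ℕ) (m : ℕ) :
    ∃ c > 0, ∀ y, PF a m y = c * embSum a y :=
  ⟨_, by positivity, fun _ => rfl⟩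

theorem le_ncard_support_of_isMaxOn {a : Fin r → ℕ} (ha : ∀ k, a k ≠ 0) (hr : r ≤ Fintype.card ι)
    {x : ι → ℝ} (hx : x ∈ stdSimplex ℝ ι) (hmax : IsMaxOn (embSum a) (stdSimplex ℝ ι) x) :
    r ≤ (Function.support x).ncard := by
  obtain ⟨c, -, -⟩ := Finset.exists_ne_zero_of_sum_ne_zero (hx.2 ▸ one_ne_zero)
  have hcard : 0 < (Fintype.card ι : ℝ) := by exact_mod_cast Fintype.card_pos_iff.2 ⟨c⟩
  have huniform : (fun _ => (Fintype.card ι : ℝ)⁻¹) ∈ stdSimplex ℝ ι :=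
    ⟨fun _ => by positivity, by simp [hcard.ne']⟩
  have : Nonempty (Fin r ↪ ι) := Function.Embedding.nonempty_of_card_le (by simpa using hr)
  have hpos : 0 < embSum a x := lt_of_lt_of_le
    (Finset.sum_pos (fun σ _ => Finset.prod_pos fun k _ => by positivity) Finset.univ_nonempty)
    (isMaxOn_iff.1 hmax _ huniform)
  obtain ⟨σ, -, hσ⟩ := Finset.exists_ne_zero_of_sum_ne_zero hpos.ne'
  have hrange : Set.range σ ⊆ Function.support x := by
    rintro _ ⟨k, rfl⟩
    exact ne_zero_pow (ha k) (Finset.prod_ne_zero_iff.1 hσ k (Finset.mem_univ k))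
  simpa [Set.ncard_range_of_injective σ.injective] using Set.ncard_le_ncard hrange

theorem eq_one_div_ncard_support {x : ι → ℝ} (hx : x ∈ stdSimplex ℝ ι) {i : ι}
    (hconst : ∀ j, x j ≠ 0 → x j = x i) : x i = 1 / ((Function.support x).ncard : ℝ) := by
  have hsum : ∑ c, x c = (Function.support x).ncard * x i := by
    have hsupp : Function.support x = ↑(univ.filter fun c => x c ≠ 0) := by ext; simp
    rw [← Finset.sum_filter_ne_zero, Finset.sum_congr rfl fun c hc => hconst c (mem_filter.1 hc).2,
      Finset.sum_const, nsmul_eq_mul, hsupp, Set.ncard_coe_finset]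
  exact eq_one_div_of_mul_eq_one_right (hx.2 ▸ hsum).symm

variable [DecidableEq ι]

theorem sum_pairUpdate (x : ι → ℝ) {i j : ι} (hij : i ≠ j) (u v : ℝ) :
    ∑ c, pairUpdate x i j u v c = ∑ c, x c + (u - x i) + (v - x j) := by
  simp only [pairUpdate_eq_add_single x hij, Pi.add_apply, Finset.sum_add_distrib,
    Finset.sum_pi_single', Finset.mem_univ, if_true]

theorem pairUpdate_mem_stdSimplex {x : ι → ℝ} (hx : x ∈ stdSimplex ℝ ι) {i j : ι} (hij : i ≠ j)
    {u v : ℝ} (hu : 0 ≤ u) (hv : 0 ≤ v) (huv : u + v = x i + x j) :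
    pairUpdate x i j u v ∈ stdSimplex ℝ ι := by
  refine ⟨pairUpdate_nonneg hx.1 hu hv, ?_⟩
  rw [sum_pairUpdate x hij, hx.2]
  linarith

theorem pairUpdate_add_zero_mem_stdSimplex {x : ι → ℝ} (hx : x ∈ stdSimplex ℝ ι) {i j : ι}
    (hij : i ≠ j) : pairUpdate x i j (x i + x j) 0 ∈ stdSimplex ℝ ι :=
  pairUpdate_mem_stdSimplex hx hij (add_nonneg (hx.1 i) (hx.1 j)) le_rfl (add_zero _)

theorem embSum_pairUpdate_comm (a : Fin r → ℕ) (x : ι → ℝ) {i j : ι} (hij : i ≠ j) (u v : ℝ) :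
    embSum a (pairUpdate x i j u v) = embSum a (pairUpdate x i j v u) :=
  Fintype.sum_equiv (Equiv.embeddingCongr (Equiv.refl _) (Equiv.swap i j)) _ _ fun σ =>
    Finset.prod_congr rfl fun k _ =>
      congrArg (· ^ a k) (pairUpdate_apply_swap x v u hij (σ k)).symm

theorem embSum_pairUpdate_eq_sum (a : Fin r → ℕ) (x : ι → ℝ) {i j : ι} (hij : i ≠ j) (u v : ℝ) :
    embSum a (pairUpdate x i j u v) = ∑ σ : Fin r ↪ ι, (∏ k, pairUpdate x i j 1 1 (σ k) ^ a k) / 2 *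
      (u ^ degAt a σ i * v ^ degAt a σ j + u ^ degAt a σ j * v ^ degAt a σ i) := by
  calc embSum a (pairUpdate x i j u v)
      = (embSum a (pairUpdate x i j u v) + embSum a (pairUpdate x i j v u)) / 2 := by
        rw [← embSum_pairUpdate_comm a x hij u v]; ring
    _ = _ := by
      rw [embSum, embSum, ← Finset.sum_add_distrib, Finset.sum_div]
      refine Finset.sum_congr rfl fun σ _ => ?_
      rw [prod_pairUpdate a x hij u v σ, prod_pairUpdate a x hij v u σ]
      ring

theorem slopeMonotone_embSum_pairUpdate {p : ℕ} (hp : 1 ≤ p) (hp4 : p ≤ 4) {a : Fin r → ℕ}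
    (ha : ∀ k, a k = p ∨ a k = p + 1) {x : ι → ℝ} (hx : 0 ≤ x) {i j : ι} (hij : i ≠ j) {S : ℝ}
    (hS : 0 ≤ S) : SlopeMonotone S fun u v => embSum a (pairUpdate x i j u v) := by
  have hdeg : ∀ (σ : Fin r ↪ ι) c, degAt a σ c = 0 ∨ degAt a σ c = p ∨ degAt a σ c = p + 1 :=
    fun σ c => by
    rcases degAt_eq_zero_or_exists a σ c with h | ⟨k, h⟩
    · exact Or.inl h
    · rw [h]; exact Or.inr (ha k)
  refine SlopeMonotone.congr (SlopeMonotone.sum univ fun σ _ =>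
    (slopeMonotone_pow_mul_pow_add_pow_mul_pow hS hp hp4 (hdeg σ i) (hdeg σ j)).const_mul ?_)
    fun u v => (embSum_pairUpdate_eq_sum a x hij u v).symm
  exact div_nonneg (Finset.prod_nonneg fun k _ =>
    pow_nonneg (pairUpdate_nonneg hx zero_le_one zero_le_one _) _) zero_le_two

theorem isMaxOn_pairUpdate_add_zero {p : ℕ} (hp : 1 ≤ p) (hp4 : p ≤ 4) {a : Fin r → ℕ}
    (ha : ∀ k, a k = p ∨ a k = p + 1) {x : ι → ℝ}
    (hx : x ∈ stdSimplex ℝ ι) (hmax : IsMaxOn (embSum a) (stdSimplex ℝ ι) x) {i j : ι}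
    (hi : x i ≠ 0) (hj : x j ≠ 0) (hne : x i ≠ x j) :
    IsMaxOn (embSum a) (stdSimplex ℝ ι) (pairUpdate x i j (x i + x j) 0) := by
  have hij : i ≠ j := (hne <| congrArg x ·)
  have hi' := (hx.1 i).lt_of_ne' hi
  have hj' := (hx.1 j).lt_of_ne' hj
  have hsm := slopeMonotone_embSum_pairUpdate hp hp4 ha hx.1 hij (S := x i + x j) (by positivity)
  have hend : embSum a (pairUpdate x i j (x i + x j) 0) ≤
      embSum a (pairUpdate x i j (x i) (x j)) := by
    rw [pairUpdate_self]
    exact isMaxOn_iff.1 hmax _ (pairUpdate_add_zero_mem_stdSimplex hx hij)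
  have hmid : embSum a (pairUpdate x i j ((x i + x j) / 2) ((x i + x j) / 2)) ≤
      embSum a (pairUpdate x i j (x i) (x j)) := by
    rw [pairUpdate_self]
    exact isMaxOn_iff.1 hmax _
      (pairUpdate_mem_stdSimplex hx hij (by positivity) (by positivity) (by ring))
  have heq := (hsm.eq_or_eq_endpoint hi' hj' hend hmid).resolve_left hne
  rw [pairUpdate_self] at heq
  exact isMaxOn_iff.2 fun y hy => heq ▸ isMaxOn_iff.1 hmax y hy

theorem eq_of_isMaxOn_embSum {p : ℕ} (hp : 1 ≤ p) (hp4 : p ≤ 4) {a : Fin r → ℕ}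
    (ha : ∀ k, a k = p ∨ a k = p + 1) (hr : 2 ≤ r)
    (hrι : r ≤ Fintype.card ι) {x : ι → ℝ} (hx : x ∈ stdSimplex ℝ ι)
    (hmax : IsMaxOn (embSum a) (stdSimplex ℝ ι) x) {i j : ι} (hi : x i ≠ 0) (hj : x j ≠ 0) :
    x i = x j := by
  induction hn : (Function.support x).ncard using Nat.strong_induction_on generalizing x i j with
  | _ n ih =>
  have hpos : ∀ c, x c ≠ 0 → 0 < x c := fun c hc => (hx.1 c).lt_of_ne' hc
  have merge : ∀ b c d, x b ≠ 0 → x c ≠ 0 → x b ≠ x c → d ≠ b → d ≠ c → x d ≠ 0 →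
      x d = x b + x c := by
    intro b c d hb hc hbc hdb hdc hd
    have hbc' : b ≠ c := (hbc <| congrArg x ·)
    have hsum : x b + x c ≠ 0 := (add_pos (hpos b hb) (hpos c hc)).ne'
    have hsupp : (Function.support (pairUpdate x b c (x b + x c) 0)).ncard < n := by
      rw [support_pairUpdate_zero hb hsum, ← hn]
      exact Set.ncard_sdiff_singleton_lt_of_mem hc
    have h := ih _ hsupp (pairUpdate_add_zero_mem_stdSimplex hx hbc')
      (isMaxOn_pairUpdate_add_zero hp hp4 ha hx hmax hb hc hbc) (i := d) (j := b)
      (by rwa [pairUpdate_apply_of_ne x _ _ hdb hdc]) (by rwa [pairUpdate_apply_left _ _ _ hbc'])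
      rfl
    rwa [pairUpdate_apply_of_ne x _ _ hdb hdc, pairUpdate_apply_left _ _ _ hbc'] at h
  by_contra hij
  have hij' : i ≠ j := (hij <| congrArg x ·)
  have hsupp : r ≤ (Function.support (pairUpdate x i j (x i + x j) 0)).ncard :=
    le_ncard_support_of_isMaxOn (fun k => by rcases ha k with h | h <;> omega) hrι
      (pairUpdate_add_zero_mem_stdSimplex hx hij')
      (isMaxOn_pairUpdate_add_zero hp hp4 ha hx hmax hi hj hij)
  obtain ⟨k, hk, hki⟩ := Set.exists_ne_of_one_lt_ncard
    (show 1 < (Function.support (pairUpdate x i j (x i + x j) 0)).ncard by omega) i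
  have hkj : k ≠ j := by rintro rfl; simp at hk
  rw [Function.mem_support, pairUpdate_apply_of_ne x _ _ hki hkj] at hk
  have hxk := merge i j k hi hj hij hki hkj hk
  have hxj := merge i k j hi hk (by linarith [hpos j hj]) hij'.symm hkj.symm hj
  linarith [hpos i hi]

end Embeddings

theorem stmt17_general {r s p q m : ℕ} (hr : 2 ≤ r) (hs3 : s ≤ 3 * r + 1)
    (hspq : s = p * r + q) (hp : 1 ≤ p) (hm : r ≤ m)
    (x : Fin m → ℝ) (hx : x ∈ stdSimplex ℝ (Fin m))
    (hmax : ∀ y ∈ stdSimplex ℝ (Fin m),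
      PF (fun i : Fin r => if (i : ℕ) < q then p + 1 else p) m y ≤
        PF (fun i : Fin r => if (i : ℕ) < q then p + 1 else p) m x) :
    ∀ i : Fin m, x i ≠ 0 →
      x i = 1 / ((Set.ncard {j : Fin m | x j ≠ 0} : ℕ) : ℝ) := by
  set a : Fin r → ℕ := fun i => if (i : ℕ) < q then p + 1 else p
  have ha : ∀ k, a k = p ∨ a k = p + 1 := fun k => by
    simp only [a]; split_ifs <;> simp
  have hp4 : p ≤ 4 := by nlinarith
  obtain ⟨c, hc, hPF⟩ := exists_pos_PF_eq_mul_embSum a m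
  have hmax' : IsMaxOn (embSum a) (stdSimplex ℝ (Fin m)) x := isMaxOn_iff.2 fun y hy =>
    le_of_mul_le_mul_left (by simpa only [hPF] using hmax y hy) hc
  intro i hi
  exact eq_one_div_ncard_support hx fun j hj =>
    eq_of_isMaxOn_embSum hp hp4 ha hr (by simpa using hm) hx hmax' hj hi

/-- For the Turán graph `F = T(s,r)` with `2 ≤ r < s ≤ 3r+1` (part sizes: `q` parts of
size `p+1` and `r-q` of size `p`, where `s = pr+q`), any maximizer `x` of `P_{F,m}` over
the standard simplex (`m ≥ r`) has all its nonzero coordinates equal to `1/ℓ`, where `ℓ`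
is the number of nonzero coordinates of `x`. -/
theorem stmt17 {r s p q m : ℕ} (hr : 2 ≤ r) (hrs : r < s) (hs3 : s ≤ 3 * r + 1)
    (hspq : s = p * r + q) (hq : q < r) (hp : 1 ≤ p) (hm : r ≤ m)
    (x : Fin m → ℝ) (hx : x ∈ stdSimplex ℝ (Fin m))
    (hmax : ∀ y ∈ stdSimplex ℝ (Fin m),
      PF (fun i : Fin r => if (i : ℕ) < q then p + 1 else p) m y ≤
        PF (fun i : Fin r => if (i : ℕ) < q then p + 1 else p) m x) :
    ∀ i : Fin m, x i ≠ 0 →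
      x i = 1 / ((Set.ncard {j : Fin m | x j ≠ 0} : ℕ) : ℝ) :=
  stmt17_general hr hs3 hspq hp hm x hx hmax
end

section
/- Let 2 ≤ r < s be integers and write s = pr + q with p ≥ 1 and 0 ≤ q < r. For integers ℓ ≥ r define g(ℓ) = ℓ!·s! / ((ℓ−r)!·(r−q)!·q!·(p!)^r·(p+1)^q·ℓ^s). Then g is strictly unimodal on {r, r+1, r+2, …}: there exists an integer t ≥ r such that g(ℓ) < g(ℓ+1) for all integers ℓ with r ≤ ℓ < t, and g(ℓ+1) < g(ℓ) for all integers ℓ ≥ t; in particular g attains its maximum at the unique point t. -/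
/-!
Write `m = ℓ + 1` and `S(m) = ∑_{i<s} (1 - 1/m)^i = m (1 - (1 - 1/m)^s)`. Then
`g(ℓ+1)/g(ℓ) = (m - S(m))/(m - r)`, so `g` decreases at `ℓ` exactly when `S(ℓ+1) > r`. As `m` grows,
`S(m)` increases to `s > r`, so the decreasing steps form a nonempty final segment. No step is flat:
`S(m) = r` would give `(m-1)^s = (m-r) m^(s-1)`, impossible as `m^(s-1) > 1` is coprime to `m - 1`.
-/

/-- The ratio function `f(ℓ) = (ℓ/(ℓ-r))·(1 - 1/ℓ)^s`. -/
noncomputable def turanRatio (r s ℓ : ℕ) : ℝ :=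
  ((ℓ : ℝ) / ((ℓ : ℝ) - (r : ℝ))) * (1 - 1 / (ℓ : ℝ)) ^ s

/-- `g(ℓ) = ℓ!·s!/((ℓ-r)!·(r-q)!·q!·(p!)^r·(p+1)^q·ℓ^s)`, where `s = pr + q`. -/
noncomputable def gTuran (r s p q ℓ : ℕ) : ℝ :=
  ((ℓ.factorial * s.factorial : ℕ) : ℝ) /
    (((ℓ - r).factorial * (r - q).factorial * q.factorial *
        p.factorial ^ r * (p + 1) ^ q : ℕ) * (ℓ : ℝ) ^ s)

open Finset Filter Topology

theorem lt_apply_of_lt_add_one_of_add_one_lt {β : Type*} [Preorder β] {f : ℕ → β} {r t ℓ : ℕ}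
    (hinc : ∀ n, r ≤ n → n < t → f n < f (n + 1)) (hdec : ∀ n, t ≤ n → f (n + 1) < f n)
    (hℓ : r ≤ ℓ) (hℓt : ℓ ≠ t) : f ℓ < f t := by
  rcases hℓt.lt_or_gt with hlt | hgt
  · have : StrictMonoOn f (Set.Icc r t) :=
      strictMonoOn_of_lt_add_one Set.ordConnected_Icc fun n _ hn hn1 => hinc n hn.1 hn1.2
    exact this ⟨hℓ, hlt.le⟩ ⟨hℓ.trans hlt.le, le_rfl⟩ hlt
  · have : StrictAntiOn f (Set.Ici t) :=
      strictAntiOn_of_add_one_lt Set.ordConnected_Ici fun n _ hn _ => hdec n hn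
    exact this Set.self_mem_Ici hgt.le hgt

noncomputable def turanSum (s m : ℕ) : ℝ := ∑ i ∈ range s, (1 - 1 / (m : ℝ)) ^ i

theorem turanSum_div (s m : ℕ) : turanSum s m / m = 1 - (1 - 1 / (m : ℝ)) ^ s := by
  rw [← geom_sum_mul_neg, turanSum]
  ring

theorem turanRatio_eq {r s m : ℕ} (hrm : r < m) :
    turanRatio r s m = (m - turanSum s m) / (m - r) := by
  have hmr : (r : ℝ) < m := by exact_mod_cast hrm
  have hm : (m : ℝ) ≠ 0 := (r.cast_nonneg.trans_lt hmr).ne'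
  rw [turanRatio, ← sub_sub_cancel 1 ((1 - 1 / (m : ℝ)) ^ s), ← turanSum_div]
  field_simp

theorem turanSum_mono (s : ℕ) {a b : ℕ} (ha : 1 ≤ a) (hab : a ≤ b) :
    turanSum s a ≤ turanSum s b := by
  have ha' : (1 : ℝ) ≤ a := by exact_mod_cast ha
  have hab' : (a : ℝ) ≤ b := by exact_mod_cast hab
  refine sum_le_sum fun i _ => pow_le_pow_left₀ ?_ ?_ i
  · rw [sub_nonneg, div_le_one (by positivity)]; exact ha'
  · gcongr

theorem tendsto_turanSum (s : ℕ) : Tendsto (turanSum s) atTop (𝓝 s) := by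
  have h : Tendsto (fun m : ℕ => 1 - 1 / (m : ℝ)) atTop (𝓝 1) := by
    simpa using tendsto_one_div_atTop_nhds_zero_nat.const_sub (1 : ℝ)
  show Tendsto (fun m : ℕ => ∑ i ∈ range s, (1 - 1 / (m : ℝ)) ^ i) atTop (𝓝 s)
  simpa using tendsto_finsetSum (range s) fun i _ => h.pow i

theorem turanSum_ne_intCast {s m : ℕ} (hs : 2 ≤ s) (hm : 2 ≤ m) (n : ℤ) : turanSum s m ≠ n := by
  intro h
  obtain ⟨k, rfl⟩ : ∃ k, s = k + 1 := ⟨s - 1, by omega⟩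
  have hm0 : (m : ℝ) ≠ 0 := by positivity
  have hreal : ((m : ℝ) - 1) ^ (k + 1) = (m - n) * m ^ k := by
    have := turanSum_div (k + 1) m
    rw [h, one_sub_div hm0, div_pow] at this
    field_simp at this
    refine mul_left_cancel₀ hm0 ?_
    linear_combination this
  have hint : ((m : ℤ) - 1) ^ (k + 1) = (m - n) * m ^ k := by exact_mod_cast hreal
  have hcop : IsCoprime ((m : ℤ) ^ k) (((m : ℤ) - 1) ^ (k + 1)) :=
    IsCoprime.pow ⟨1, -1, by ring⟩
  have hunit := hcop.isUnit_of_dvd' dvd_rfl ⟨m - n, by rw [hint]; ring⟩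
  have : (2 : ℤ) ≤ (m : ℤ) ^ k := le_trans (by exact_mod_cast hm) (le_self_pow₀ (by omega) (by omega))
  rcases Int.isUnit_iff.mp hunit with h1 | h1 <;> omega

theorem gTuran_pos {r s p q ℓ : ℕ} (hℓ : 0 < ℓ) : 0 < gTuran r s p q ℓ := by
  have : (0 : ℝ) < ℓ := by exact_mod_cast hℓ
  unfold gTuran
  positivity

theorem gTuran_succ {r s p q ℓ : ℕ} (hℓ : r ≤ ℓ) (hℓ0 : 0 < ℓ) :
    gTuran r s p q (ℓ + 1) = gTuran r s p q ℓ * turanRatio r s (ℓ + 1) := by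
  have hℓ0 : (0 : ℝ) < ℓ := by exact_mod_cast hℓ0
  have hℓr : (0 : ℝ) < ℓ - r + 1 := by
    have : (r : ℝ) ≤ ℓ := by exact_mod_cast hℓ
    linarith
  rw [gTuran, gTuran, turanRatio, Nat.sub_add_comm hℓ, Nat.factorial_succ, Nat.factorial_succ]
  push_cast [Nat.cast_sub hℓ]
  rw [one_sub_div (by positivity), add_sub_cancel_right, div_pow, add_sub_right_comm]
  field_simp

theorem gTuran_succ_lt_iff {r s p q ℓ : ℕ} (hℓ : r ≤ ℓ) (hℓ0 : 0 < ℓ) :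
    gTuran r s p q (ℓ + 1) < gTuran r s p q ℓ ↔ (r : ℝ) < turanSum s (ℓ + 1) := by
  have hℓr : (r : ℝ) < ((ℓ + 1 : ℕ) : ℝ) := by exact_mod_cast Nat.lt_succ_of_le hℓ
  rw [gTuran_succ hℓ hℓ0, mul_lt_iff_lt_one_right (gTuran_pos hℓ0), turanRatio_eq (by omega),
    div_lt_one (sub_pos.mpr hℓr)]
  constructor <;> intro h <;> linarith

theorem gTuran_lt_succ_iff {r s p q ℓ : ℕ} (hℓ : r ≤ ℓ) (hℓ0 : 0 < ℓ) :
    gTuran r s p q ℓ < gTuran r s p q (ℓ + 1) ↔ turanSum s (ℓ + 1) < r := by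
  have hℓr : (r : ℝ) < ((ℓ + 1 : ℕ) : ℝ) := by exact_mod_cast Nat.lt_succ_of_le hℓ
  rw [gTuran_succ hℓ hℓ0, lt_mul_iff_one_lt_right (gTuran_pos hℓ0), turanRatio_eq (by omega),
    one_lt_div (sub_pos.mpr hℓr)]
  constructor <;> intro h <;> linarith

theorem stmt18_general {r s p q : ℕ} (hr : 2 ≤ r) (hrs : r < s) :
    ∃ t : ℕ, r ≤ t ∧
      (∀ ℓ : ℕ, r ≤ ℓ → ℓ < t → gTuran r s p q ℓ < gTuran r s p q (ℓ + 1)) ∧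
      (∀ ℓ : ℕ, t ≤ ℓ → gTuran r s p q (ℓ + 1) < gTuran r s p q ℓ) ∧
      (∀ ℓ : ℕ, r ≤ ℓ → ℓ ≠ t → gTuran r s p q ℓ < gTuran r s p q t) := by
  have hrs' : (r : ℝ) < s := by exact_mod_cast hrs
  have hexists : ∃ ℓ, r ≤ ℓ ∧ (r : ℝ) < turanSum s (ℓ + 1) :=
    (((tendsto_turanSum s).comp (tendsto_add_atTop_nat 1)).eventually
      (lt_mem_nhds hrs')).and (eventually_ge_atTop r) |>.exists.imp fun _ h => ⟨h.2, h.1⟩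
  set t := Nat.find hexists
  obtain ⟨hrt, hSt⟩ : r ≤ t ∧ (r : ℝ) < turanSum s (t + 1) := Nat.find_spec hexists
  have hinc : ∀ ℓ, r ≤ ℓ → ℓ < t → gTuran r s p q ℓ < gTuran r s p q (ℓ + 1) := by
    intro ℓ hℓ hℓt
    have hle : turanSum s (ℓ + 1) ≤ r := not_lt.mp fun h => Nat.find_min hexists hℓt ⟨hℓ, h⟩
    exact (gTuran_lt_succ_iff hℓ (by omega)).mpr
      (hle.lt_of_ne (by exact_mod_cast turanSum_ne_intCast (by omega) (by omega) r))
  have hdec : ∀ ℓ, t ≤ ℓ → gTuran r s p q (ℓ + 1) < gTuran r s p q ℓ := fun ℓ hℓ =>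
    (gTuran_succ_lt_iff (hrt.trans hℓ) (by omega)).mpr
      (hSt.trans_le (turanSum_mono s (by omega) (by omega)))
  exact ⟨t, hrt, hinc, hdec, fun ℓ hℓ hℓt => lt_apply_of_lt_add_one_of_add_one_lt hinc hdec hℓ hℓt⟩

/-- Strict unimodality of `g(ℓ) = ℓ!·s!/((ℓ-r)!·(r-q)!·q!·(p!)^r·(p+1)^q·ℓ^s)` on
`{r, r+1, …}`: there is `t ≥ r` such that `g` strictly increases up to `t` and strictly
decreases afterwards; in particular `g` attains its maximum at the unique point `t`. -/
theorem stmt18 {r s p q : ℕ} (hr : 2 ≤ r) (hrs : r < s) (hp : 1 ≤ p)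
    (hspq : s = p * r + q) (hq : q < r) :
    ∃ t : ℕ, r ≤ t ∧
      (∀ ℓ : ℕ, r ≤ ℓ → ℓ < t → gTuran r s p q ℓ < gTuran r s p q (ℓ + 1)) ∧
      (∀ ℓ : ℕ, t ≤ ℓ → gTuran r s p q (ℓ + 1) < gTuran r s p q ℓ) ∧
      (∀ ℓ : ℕ, r ≤ ℓ → ℓ ≠ t → gTuran r s p q ℓ < gTuran r s p q t) :=
  stmt18_general hr hrs
end
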